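/- arXiv:2107.06380 — 7 statements merged into one kernel-verified Lean document; each statement's English description precedes it below -/
import Mathlib

section
/- Suppose x_0 > x_1 > ... > x_n are real numbers and {p_k}_{k=0}^n satisfies the recurrence p_{k+1}(x) + p_{k-1}(x) = (a_k x + b_k) p_k(x) (1 ≤ k ≤ n−1), p_0 = 1, p_1 = a_0 x + b_0, with a_k > 0, together with the reflection condition a_k = a_{n−k}, b_k = b_{n−k} for 1 ≤ k ≤ n−1. If additionally n = 2m−1 is odd and p_m(x_j) = (−1)^j p_{m−1}(x_j) for all 0 ≤ j ≤ n, then the full alternation condition holds: p_{n−k}(x_j) = (−1)^j p_k(x_j) for all 0 ≤ j, k ≤ n. -/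
/-!
Fix a node `x_j` and put `q_k = p_k(x_j)`, `c_k = a_k x_j + b_k`. Then `q` solves the three-term
recurrence `q_{k+1} + q_{k-1} = c_k q_k`, and so does `(-1)^j q`. By the reflection symmetry
`c_k = c_{n-k}`, the reversed sequence `k ↦ q_{n-k}` solves it as well. A solution of a
second-order recurrence is determined by its values at two consecutive indices, and the central
hypothesis says that `k ↦ q_{n-k}` and `k ↦ (-1)^j q_k` agree at `m - 1` and `m`.
-/

open Polynomial

def SolvesRecurrence {R : Type*} [CommRing R] (c : ℕ → R) (n : ℕ) (u : ℕ → R) : Prop :=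
  ∀ k, 1 ≤ k → k + 1 ≤ n → u (k + 1) + u (k - 1) = c k * u k

namespace SolvesRecurrence

variable {R : Type*} [CommRing R] {c c' : ℕ → R} {n : ℕ} {u v : ℕ → R}

theorem const_mul (h : SolvesRecurrence c n u) (s : R) :
    SolvesRecurrence c n (fun k => s * u k) := fun k hk1 hk2 => by
  linear_combination s * h k hk1 hk2

theorem congr (h : SolvesRecurrence c n u) (hc : ∀ k, 1 ≤ k → k + 1 ≤ n → c k = c' k) :
    SolvesRecurrence c' n u := fun k hk1 hk2 => by
  rw [← hc k hk1 hk2, h k hk1 hk2]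

theorem reflect (h : SolvesRecurrence c n u) :
    SolvesRecurrence (fun k => c (n - k)) n (fun k => u (n - k)) := fun k hk1 hk2 => by
  have hrec := h (n - k) (by omega) (by omega)
  rw [show n - k + 1 = n - (k - 1) by omega, show n - k - 1 = n - (k + 1) by omega] at hrec
  rw [add_comm, hrec]

theorem eq_upward (hu : SolvesRecurrence c n u) (hv : SolvesRecurrence c n v) {i : ℕ}
    (h₀ : u i = v i) (h₁ : u (i + 1) = v (i + 1)) : ∀ k, i ≤ k → k ≤ n → u k = v k := by
  have pair : ∀ d, i + d + 1 ≤ n → u (i + d) = v (i + d) ∧ u (i + d + 1) = v (i + d + 1) := by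
    intro d
    induction d with
    | zero => exact fun _ => ⟨h₀, h₁⟩
    | succ d ih =>
      intro hd
      obtain ⟨e₀, e₁⟩ := ih (by omega)
      have hu' := hu (i + d + 1) (by omega) (by omega)
      have hv' := hv (i + d + 1) (by omega) (by omega)
      simp only [Nat.add_sub_cancel] at hu' hv'
      refine ⟨e₁, ?_⟩
      linear_combination hu' - hv' + c (i + d + 1) * e₁ - e₀
  intro k hik hkn
  obtain ⟨d, rfl⟩ := Nat.exists_eq_add_of_le hik
  rcases Nat.lt_or_ge (i + d) n with hlt | hge
  · exact (pair d (by omega)).1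
  · obtain rfl | hd := Nat.eq_zero_or_pos d
    · exact h₀
    · simpa [show i + (d - 1) + 1 = i + d by omega] using (pair (d - 1) (by omega)).2

theorem eq_downward (hu : SolvesRecurrence c n u) (hv : SolvesRecurrence c n v) {i : ℕ}
    (hi : i + 1 ≤ n) (h₀ : u i = v i) (h₁ : u (i + 1) = v (i + 1)) :
    ∀ k, k ≤ i + 1 → u k = v k := by
  intro k hk
  have h₀' : u (n - (n - (i + 1))) = v (n - (n - (i + 1))) := by
    rwa [Nat.sub_sub_self hi]
  have h₁' : u (n - (n - (i + 1) + 1)) = v (n - (n - (i + 1) + 1)) := by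
    rwa [show n - (n - (i + 1) + 1) = i by omega]
  have := hu.reflect.eq_upward hv.reflect h₀' h₁' (n - k) (by omega) (by omega)
  simpa only [Nat.sub_sub_self (show k ≤ n by omega)] using this

theorem eq_of_consecutive (hu : SolvesRecurrence c n u) (hv : SolvesRecurrence c n v) {i : ℕ}
    (hi : i + 1 ≤ n) (h₀ : u i = v i) (h₁ : u (i + 1) = v (i + 1)) :
    ∀ k, k ≤ n → u k = v k := fun k hk =>
  (le_total k (i + 1)).elim (hu.eq_downward hv hi h₀ h₁ k) fun hik =>
    hu.eq_upward hv h₀ h₁ k (by omega) hk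

end SolvesRecurrence

theorem alternation_odd_general (n m : ℕ) (hm : 1 ≤ m) (hn : n = 2*m - 1)
    (x : ℕ → ℝ)
    (a b : ℕ → ℝ) (p : ℕ → Polynomial ℝ)
    (hrec : ∀ k, 1 ≤ k → k ≤ n - 1 →
      p (k+1) + p (k-1) = (C (a k) * X + C (b k)) * p k)
    (hrefl : ∀ k, 1 ≤ k → k ≤ n - 1 → a k = a (n - k) ∧ b k = b (n - k))
    (hcen : ∀ j, j ≤ n → (p m).eval (x j) = (-1)^j * (p (m-1)).eval (x j)) :
    ∀ j k, j ≤ n → k ≤ n → (p (n - k)).eval (x j) = (-1)^j * (p k).eval (x j) := by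
  intro j k hj hk
  have hq : SolvesRecurrence (fun k => a k * x j + b k) n (fun k => (p k).eval (x j)) :=
    fun k hk1 hk2 => by simpa using congrArg (eval (x j)) (hrec k hk1 (by omega))
  have hreflected : SolvesRecurrence (fun k => a k * x j + b k) n
      (fun k => (p (n - k)).eval (x j)) :=
    hq.reflect.congr fun k hk1 hk2 => by
      obtain ⟨ha, hb⟩ := hrefl k hk1 (by omega)
      simp only [ha, hb]
  have hsign : ((-1 : ℝ) ^ j) ^ 2 = 1 := by rw [← pow_mul, mul_comm, pow_mul, neg_one_sq, one_pow]
  have hcen' := hcen j hj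
  refine hreflected.eq_of_consecutive (hq.const_mul ((-1) ^ j)) (i := m - 1) (by omega) ?_ ?_ k hk
  · simpa only [show n - (m - 1) = m by omega] using hcen'
  · simp only [show m - 1 + 1 = m by omega, show n - m = m - 1 by omega]
    linear_combination -(-1 : ℝ) ^ j * hcen' - (p (m - 1)).eval (x j) * hsign

theorem alternation_odd (n m : ℕ) (hm : 1 ≤ m) (hn : n = 2*m - 1)
    (x : ℕ → ℝ) (hx : ∀ j, j < n → x (j+1) < x j)
    (a b : ℕ → ℝ) (p : ℕ → Polynomial ℝ)
    (hp0 : p 0 = 1)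
    (hp1 : p 1 = C (a 0) * X + C (b 0))
    (hrec : ∀ k, 1 ≤ k → k ≤ n - 1 →
      p (k+1) + p (k-1) = (C (a k) * X + C (b k)) * p k)
    (hpos : ∀ k, k ≤ n - 1 → 0 < a k)
    (hrefl : ∀ k, 1 ≤ k → k ≤ n - 1 → a k = a (n - k) ∧ b k = b (n - k))
    (hcen : ∀ j, j ≤ n → (p m).eval (x j) = (-1)^j * (p (m-1)).eval (x j)) :
    ∀ j k, j ≤ n → k ≤ n → (p (n - k)).eval (x j) = (-1)^j * (p k).eval (x j) :=
  alternation_odd_general n m hm hn x a b p hrec hrefl hcen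
end

section
/- Suppose n = 2m is even, x_0 > x_1 > ... > x_n are real, and {p_k}_{k=0}^n is defined by the recurrence p_{k+1}(x) + p_{k-1}(x) = (a_k x + b_k) p_k(x) with a_k > 0 and reflection symmetry a_k = a_{n−k}, b_k = b_{n−k} for 1 ≤ k ≤ n−1. If p_m(x_j) = 0 for all odd j and p_{m+1}(x_j) = p_{m−1}(x_j) for all even j (0 ≤ j ≤ n), then p_{n−k}(x_j) = (−1)^j p_k(x_j) for all 0 ≤ j, k ≤ n. -/
/-!
At a fixed node `t` the values `q k = p_k(t)` obey a scalar three-term recurrence whose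
coefficients `a k * t + b k` are symmetric about `m`. Run outwards from the centre, such a
recurrence propagates `q (m+i) = s * q (m-i)` from `i = 0, 1` to all `i ≤ m`. With `s = (-1)^j`
the two central relations are the hypotheses: for odd `j`, `p_m(t) = 0` and the recurrence at `m`
give `p_{m+1}(t) = -p_{m-1}(t)`.
-/

open Polynomial Finset

section SymmetricRecurrence

variable {R : Type*} [CommRing R] {m : ℕ} {q c : ℕ → R} {s : R}

theorem eq_mul_reflect_of_symmetric_recurrence
    (hrec : ∀ k, 1 ≤ k → k ≤ 2 * m - 1 → q (k + 1) + q (k - 1) = c k * q k)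
    (hsymm : ∀ k, 1 ≤ k → k ≤ 2 * m - 1 → c k = c (2 * m - k))
    (hcenter : q m = s * q m) (hnext : q (m + 1) = s * q (m - 1)) :
    ∀ i ≤ m, q (m + i) = s * q (m - i) := by
  intro i
  induction i using Nat.twoStepInduction with
  | zero => exact fun _ => by simpa using hcenter
  | one => exact fun _ => hnext
  | more i ih₀ ih₁ =>
    intro hi
    have hup : q (m + (i + 2)) + q (m + i) = c (m + (i + 1)) * q (m + (i + 1)) := by
      simpa only [show m + (i + 1) + 1 = m + (i + 2) by omega,
        show m + (i + 1) - 1 = m + i by omega] using hrec (m + (i + 1)) (by omega) (by omega)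
    have hdown : q (m - i) + q (m - (i + 2)) = c (m + (i + 1)) * q (m - (i + 1)) := by
      rw [hsymm (m + (i + 1)) (by omega) (by omega), show 2 * m - (m + (i + 1)) = m - (i + 1) by omega]
      simpa only [show m - (i + 1) + 1 = m - i by omega,
        show m - (i + 1) - 1 = m - (i + 2) by omega] using hrec (m - (i + 1)) (by omega) (by omega)
    linear_combination hup - s * hdown + c (m + (i + 1)) * ih₁ (by omega) - ih₀ (by omega)

theorem reflect_eq_mul_of_symmetric_recurrence (hs : s * s = 1)
    (hrec : ∀ k, 1 ≤ k → k ≤ 2 * m - 1 → q (k + 1) + q (k - 1) = c k * q k)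
    (hsymm : ∀ k, 1 ≤ k → k ≤ 2 * m - 1 → c k = c (2 * m - k))
    (hcenter : q m = s * q m) (hnext : q (m + 1) = s * q (m - 1)) :
    ∀ k ≤ 2 * m, q (2 * m - k) = s * q k := by
  have hreflect := eq_mul_reflect_of_symmetric_recurrence hrec hsymm hcenter hnext
  intro k hk
  rcases le_or_gt k m with hkm | hkm
  · simpa only [show m + (m - k) = 2 * m - k by omega, show m - (m - k) = k by omega]
      using hreflect (m - k) (by omega)
  · have h := hreflect (k - m) (by omega)
    rw [show m + (k - m) = k by omega, show m - (k - m) = 2 * m - k by omega] at h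
    rw [h, ← mul_assoc, hs, one_mul]

end SymmetricRecurrence

theorem alternation_even_general (n m : ℕ) (hm : 1 ≤ m) (hn : n = 2*m)
    (x : ℕ → ℝ)
    (a b : ℕ → ℝ) (p : ℕ → Polynomial ℝ)
    (hrec : ∀ k, 1 ≤ k → k ≤ n - 1 →
      p (k+1) + p (k-1) = (C (a k) * X + C (b k)) * p k)
    (hrefl : ∀ k, 1 ≤ k → k ≤ n - 1 → a k = a (n - k) ∧ b k = b (n - k))
    (hodd : ∀ j, j ≤ n → Odd j → (p m).eval (x j) = 0)
    (heven : ∀ j, j ≤ n → Even j → (p (m+1)).eval (x j) = (p (m-1)).eval (x j)) :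
    ∀ j k, j ≤ n → k ≤ n → (p (n - k)).eval (x j) = (-1)^j * (p k).eval (x j) := by
  intro j k hj hk
  subst hn
  have hrec_at : ∀ k, 1 ≤ k → k ≤ 2 * m - 1 → (p (k + 1)).eval (x j) + (p (k - 1)).eval (x j)
      = (a k * x j + b k) * (p k).eval (x j) := fun k h₁ h₂ => by
    simpa using congrArg (eval (x j)) (hrec k h₁ h₂)
  have hsymm : ∀ k, 1 ≤ k → k ≤ 2 * m - 1 → a k * x j + b k = a (2 * m - k) * x j + b (2 * m - k) :=
    fun k h₁ h₂ => by rw [(hrefl k h₁ h₂).1, (hrefl k h₁ h₂).2]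
  refine reflect_eq_mul_of_symmetric_recurrence (q := fun k => (p k).eval (x j))
    (by rw [← mul_pow]; norm_num) hrec_at hsymm ?_ ?_ k hk
  all_goals rcases Nat.even_or_odd j with hj' | hj'
  · simp [hj'.neg_one_pow]
  · simp [hj'.neg_one_pow, hodd j hj hj']
  · simpa [hj'.neg_one_pow] using heven j hj hj'
  · have hmid := hrec_at m hm (by omega)
    rw [hodd j hj hj', mul_zero] at hmid
    rw [hj'.neg_one_pow]
    linear_combination hmid

theorem alternation_even (n m : ℕ) (hm : 1 ≤ m) (hn : n = 2*m)
    (x : ℕ → ℝ) (hx : ∀ j, j < n → x (j+1) < x j)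
    (a b : ℕ → ℝ) (p : ℕ → Polynomial ℝ)
    (hp0 : p 0 = 1)
    (hp1 : p 1 = C (a 0) * X + C (b 0))
    (hrec : ∀ k, 1 ≤ k → k ≤ n - 1 →
      p (k+1) + p (k-1) = (C (a k) * X + C (b k)) * p k)
    (hpos : ∀ k, k ≤ n - 1 → 0 < a k)
    (hrefl : ∀ k, 1 ≤ k → k ≤ n - 1 → a k = a (n - k) ∧ b k = b (n - k))
    (hodd : ∀ j, j ≤ n → Odd j → (p m).eval (x j) = 0)
    (heven : ∀ j, j ≤ n → Even j → (p (m+1)).eval (x j) = (p (m-1)).eval (x j)) :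
    ∀ j k, j ≤ n → k ≤ n → (p (n - k)).eval (x j) = (-1)^j * (p k).eval (x j) :=
  alternation_even_general n m hm hn x a b p hrec hrefl hodd heven
end

section
/- Let p and q be real polynomials with deg p = m, deg q = m−1, both with positive leading coefficients, and suppose their zeros strictly interlace: if u_1 > ... > u_m are the zeros of p and v_1 > ... > v_{m−1} the zeros of q, then u_1 > v_1 > u_2 > v_2 > ... > v_{m−1} > u_m. Then p − q has at least one real zero in each of the m intervals (u_1, ∞), (u_2, v_1), ..., (u_m, v_{m−1}), and p + q has at least one real zero in each of the m intervals (v_1, u_1), ..., (v_{m−1}, u_{m−1}), (−∞, u_m). Consequently p − q and p + q each have m distinct real zeros, and the combined 2m zeros are all distinct. -/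
/-!
Merged, the zeros form the strictly decreasing sequence `u₁ > v₁ > u₂ > ⋯ > v_{m-1} > u_m`.
Reading off how many factors of each product are negative, `q (u i)` has sign `(-1)^(i-1)` and
`p (v i)` has sign `(-1)^i`. As `p (u i) = q (v i) = 0`, the values of `p - q` at `u i` and
`v (i-1)`, and those of `p + q` at `v i` and `u i`, are `∓ q (u i)` and `p (v j)` and so have
opposite signs. Since `deg q < deg p`, both `p - q` and `p + q` have leading term `cp xᵐ`, which
supplies the opposite sign at `+∞` for `p - q` and at `-∞` for `p + q`. The intermediate value
theorem then gives a zero in each of the `2m` intervals; these intervals are consecutive and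
disjoint, so the zeros found, taken in order, again form a strictly decreasing sequence.
-/

open Polynomial Finset Filter

theorem exists_mem_Ioo_eq_zero_of_mul_neg {α : Type*} [ConditionallyCompleteLinearOrder α]
    [TopologicalSpace α] [OrderTopology α] [DenselyOrdered α] {f : α → ℝ} {a b : α}
    (hab : a ≤ b) (hf : ContinuousOn f (Set.Icc a b)) (h : f a * f b < 0) :
    ∃ z ∈ Set.Ioo a b, f z = 0 := by
  rcases (left_ne_zero_of_mul h.ne).lt_or_gt with ha | ha
  · exact intermediate_value_Ioo hab hf ⟨ha, pos_of_mul_neg_right h ha.le⟩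
  · exact intermediate_value_Ioo' hab hf ⟨neg_of_mul_neg_right h ha.le, ha⟩

section SignOfProduct

variable {R : Type*} [CommRing R] [LinearOrder R] [IsStrictOrderedRing R]

theorem mul_pos_of_neg_one_pow_mul_pos {a b : R} (k : ℕ) (ha : 0 < (-1) ^ k * a)
    (hb : 0 < (-1) ^ k * b) : 0 < a * b := by
  have h := mul_pos ha hb
  rwa [mul_mul_mul_comm, ← mul_pow, neg_one_mul, neg_neg, one_pow, one_mul] at h

theorem mul_neg_of_neg_one_pow_succ_mul_pos {a b : R} (k : ℕ) (ha : 0 < (-1) ^ (k + 1) * a)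
    (hb : 0 < (-1) ^ k * b) : a * b < 0 := by
  rw [pow_succ, mul_assoc, neg_one_mul] at ha
  simpa using mul_pos_of_neg_one_pow_mul_pos k ha hb

theorem neg_one_pow_card_filter_mul_prod_sub_pos {ι : Type*} (s : Finset ι) (w : ι → R) {x : R}
    (hx : ∀ j ∈ s, w j ≠ x) : 0 < (-1) ^ #{j ∈ s | x < w j} * ∏ j ∈ s, (x - w j) := by
  rw [← prod_filter_mul_prod_filter_not s (fun j => x < w j), ← mul_assoc, ← prod_neg]
  refine mul_pos (prod_pos fun j hj => ?_) (prod_pos fun j hj => ?_)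
  · simpa using (mem_filter.1 hj).2
  · obtain ⟨hjs, hle⟩ := mem_filter.1 hj
    exact sub_pos.2 ((not_lt.1 hle).lt_of_ne (hx j hjs))

end SignOfProduct

namespace Polynomial

variable {𝕜 : Type*} [NormedField 𝕜] [LinearOrder 𝕜] [IsStrictOrderedRing 𝕜] [OrderTopology 𝕜]
  {P Q : 𝕜[X]}

theorem tendsto_neg_one_pow_mul_eval_atBot (hdeg : 0 < P.degree) (hlc : 0 < P.leadingCoeff) :
    Tendsto (fun x => (-1) ^ P.natDegree * P.eval x) atBot atTop := by
  set P' := C ((-1) ^ P.natDegree) * P.comp (-X)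
  have hP' : Tendsto (fun x => P'.eval x) atTop atTop := by
    refine P'.tendsto_atTop_of_leadingCoeff_nonneg (by simpa [P']) ?_
    simp [P', ← mul_assoc, ← mul_pow, hlc.le]
  exact (hP'.comp tendsto_neg_atBot_atTop).congr fun x => by simp [P', eval_comp]

theorem tendsto_eval_sub_atTop_of_degree_lt (hQP : Q.degree < P.degree) (hdeg : 0 < P.degree)
    (hlc : 0 < P.leadingCoeff) : Tendsto (fun x => (P - Q).eval x) atTop atTop :=
  tendsto_atTop_of_leadingCoeff_nonneg _ (by rwa [degree_sub_eq_left_of_degree_lt hQP])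
    (by rw [leadingCoeff_sub_of_degree_lt hQP]; exact hlc.le)

theorem tendsto_neg_one_pow_mul_eval_add_atBot_of_degree_lt (hQP : Q.degree < P.degree)
    (hdeg : 0 < P.degree) (hlc : 0 < P.leadingCoeff) :
    Tendsto (fun x => (-1) ^ P.natDegree * (P + Q).eval x) atBot atTop := by
  have := tendsto_neg_one_pow_mul_eval_atBot (P := P + Q)
    (by rwa [degree_add_eq_left_of_degree_lt hQP]) (by rwa [leadingCoeff_add_of_degree_lt' hQP])
  rwa [natDegree_add_eq_left_of_degree_lt hQP] at this

end Polynomial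

section Interleave

variable {α : Type*} (u v : ℕ → α)

def interleave (n : ℕ) : α := if Even n then u (n / 2) else v (n / 2)

@[simp] theorem interleave_two_mul (i : ℕ) : interleave u v (2 * i) = u i := by
  simp [interleave]

@[simp] theorem interleave_two_mul_add_one (i : ℕ) : interleave u v (2 * i + 1) = v i := by
  simp [interleave, Nat.add_div_of_dvd_right]

variable {u v} [Preorder α] {N : ℕ}

theorem strictAntiOn_interleave (huv : ∀ i, 1 ≤ i → 2 * i < N → v i < u i)
    (hvu : ∀ i, 1 ≤ i → 2 * i + 1 < N → u (i + 1) < v i) :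
    StrictAntiOn (interleave u v) (Set.Icc 2 N) := by
  refine strictAntiOn_of_succ_lt Set.ordConnected_Icc fun n _ hn hsn => ?_
  rw [Order.succ_eq_add_one] at hsn ⊢
  obtain ⟨i, rfl | rfl⟩ := n.even_or_odd'
  · simpa using huv i (by grind) (by grind)
  · simpa [show 2 * i + 1 + 1 = 2 * (i + 1) by ring] using hvu i (by grind) (by grind)

theorem StrictAntiOn.interleave_left_lt_right_iff
    (hw : StrictAntiOn (interleave u v) (Set.Icc 2 N)) {i j : ℕ} (hi : 1 ≤ i) (hiN : 2 * i ≤ N)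
    (hj : 1 ≤ j) (hjN : 2 * j + 1 ≤ N) : u i < v j ↔ j < i := by
  rw [← interleave_two_mul u v, ← interleave_two_mul_add_one u v,
    hw.lt_iff_gt ⟨by omega, hiN⟩ ⟨by omega, hjN⟩]
  omega

theorem StrictAntiOn.interleave_right_lt_left_iff
    (hw : StrictAntiOn (interleave u v) (Set.Icc 2 N)) {i j : ℕ} (hi : 1 ≤ i) (hiN : 2 * i ≤ N)
    (hj : 1 ≤ j) (hjN : 2 * j + 1 ≤ N) : v j < u i ↔ i ≤ j := by
  rw [← interleave_two_mul u v, ← interleave_two_mul_add_one u v,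
    hw.lt_iff_gt ⟨by omega, hjN⟩ ⟨by omega, hiN⟩]
  omega

theorem StrictAntiOn.interleave_right_ne_left
    (hw : StrictAntiOn (interleave u v) (Set.Icc 2 N)) {i j : ℕ} (hi : 1 ≤ i) (hiN : 2 * i ≤ N)
    (hj : 1 ≤ j) (hjN : 2 * j + 1 ≤ N) : v j ≠ u i := fun h => by
  have := hw.injOn (x₁ := 2 * i) (x₂ := 2 * j + 1) ⟨by omega, hiN⟩ ⟨by omega, hjN⟩
    (by simpa using h.symm)
  omega

theorem StrictAntiOn.exists_disjoint_finsets_of_interleave {P Q : α → Prop} {m : ℕ}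
    (h : StrictAntiOn (interleave u v) (Set.Icc 2 (2 * m + 1)))
    (hP : ∀ i, 1 ≤ i → i ≤ m → P (u i)) (hQ : ∀ i, 1 ≤ i → i ≤ m → Q (v i)) :
    ∃ s t : Finset α, #s = m ∧ #t = m ∧ (∀ z ∈ s, P z) ∧ (∀ z ∈ t, Q z) ∧ Disjoint s t := by
  classical
  have hidx {a b : ℕ} (ha : a ∈ Icc 1 m) (hb : b ∈ Icc 1 m) (c d : ℕ) (hc : c ≤ 1) (hd : d ≤ 1)
      (hab : interleave u v (2 * a + c) = interleave u v (2 * b + d)) : a = b ∧ c = d := by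
    rw [mem_Icc] at ha hb
    have := h.injOn ⟨by omega, by omega⟩ ⟨by omega, by omega⟩ hab
    omega
  refine ⟨(Icc 1 m).image u, (Icc 1 m).image v, ?_, ?_,
    forall_mem_image.2 fun i hi => hP i (mem_Icc.1 hi).1 (mem_Icc.1 hi).2,
    forall_mem_image.2 fun i hi => hQ i (mem_Icc.1 hi).1 (mem_Icc.1 hi).2, ?_⟩
  · rw [card_image_of_injOn fun a ha b hb hab =>
      (hidx ha hb 0 0 zero_le_one zero_le_one (by simpa)).1]
    simp
  · rw [card_image_of_injOn fun a ha b hb hab => (hidx ha hb 1 1 le_rfl le_rfl (by simpa)).1]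
    simp
  · refine disjoint_left.2 fun _ hua hvb => ?_
    obtain ⟨a, ha, rfl⟩ := mem_image.1 hua
    obtain ⟨b, hb, hba⟩ := mem_image.1 hvb
    exact one_ne_zero (hidx hb ha 1 0 le_rfl zero_le_one (by simpa using hba)).2

end Interleave

section RootPoly

variable {R : Type*} [CommRing R]

noncomputable def rootPoly (c : R) (w : ℕ → R) (n : ℕ) : R[X] :=
  C c * ∏ i ∈ range n, (X - C (w (i + 1)))

variable (w : ℕ → R) (n : ℕ)

theorem eval_rootPoly (c x : R) :
    (rootPoly c w n).eval x = c * ∏ i ∈ range n, (x - w (i + 1)) := by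
  simp [rootPoly, eval_prod]

theorem eval_rootPoly_eq_zero (c : R) {i : ℕ} (hi : 1 ≤ i) (hin : i ≤ n) :
    (rootPoly c w n).eval (w i) = 0 := by
  rw [eval_rootPoly, prod_eq_zero (i := i - 1) (mem_range.2 (by omega)), mul_zero]
  rw [Nat.sub_add_cancel hi, sub_self]

theorem neg_one_pow_card_mul_eval_rootPoly_pos [LinearOrder R] [IsStrictOrderedRing R] {c : R}
    (hc : 0 < c) {x : R} (hx : ∀ j ∈ range n, w (j + 1) ≠ x) :
    0 < (-1) ^ #{j ∈ range n | x < w (j + 1)} * (rootPoly c w n).eval x := by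
  rw [eval_rootPoly, mul_left_comm]
  exact mul_pos hc (neg_one_pow_card_filter_mul_prod_sub_pos _ _ hx)

variable [IsDomain R]

theorem degree_rootPoly {c : R} (hc : c ≠ 0) : (rootPoly c w n).degree = n := by
  simp [rootPoly, degree_C_mul hc, degree_prod]

theorem natDegree_rootPoly {c : R} (hc : c ≠ 0) : (rootPoly c w n).natDegree = n :=
  natDegree_eq_of_degree_eq_some (degree_rootPoly w n hc)

theorem leadingCoeff_rootPoly (c : R) : (rootPoly c w n).leadingCoeff = c := by
  rw [rootPoly, leadingCoeff_mul, leadingCoeff_C,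
    (monic_prod_of_monic _ _ fun _ _ => monic_X_sub_C _).leadingCoeff, mul_one]

end RootPoly

section Interlacing

variable {m : ℕ} {u v : ℕ → ℝ} {cp cq : ℝ}

theorem StrictAntiOn.neg_one_pow_mul_eval_rootPoly_at_left_pos
    (hw : StrictAntiOn (interleave u v) (Set.Icc 2 (2 * m))) (hcq : 0 < cq) {i : ℕ}
    (hi : 1 ≤ i) (him : i ≤ m) : 0 < (-1) ^ (i - 1) * (rootPoly cq v (m - 1)).eval (u i) := by
  have hfilter : {j ∈ range (m - 1) | u i < v (j + 1)} = range (i - 1) := by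
    ext j
    simp only [mem_filter, mem_range]
    constructor
    · rintro ⟨hj, hlt⟩
      have := (hw.interleave_left_lt_right_iff hi (by omega) (by omega) (by omega)).1 hlt
      omega
    · intro hj
      exact ⟨by omega, (hw.interleave_left_lt_right_iff hi (by omega) (by omega) (by omega)).2
        (by omega)⟩
  have := neg_one_pow_card_mul_eval_rootPoly_pos v (m - 1) hcq fun j hj =>
    hw.interleave_right_ne_left hi (by omega) (by omega) (by simp at hj; omega)
  rwa [hfilter, card_range] at this

theorem StrictAntiOn.neg_one_pow_mul_eval_rootPoly_at_right_pos
    (hw : StrictAntiOn (interleave u v) (Set.Icc 2 (2 * m))) (hcp : 0 < cp) {i : ℕ}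
    (hi : 1 ≤ i) (him : i ≤ m - 1) : 0 < (-1) ^ i * (rootPoly cp u m).eval (v i) := by
  have hfilter : {j ∈ range m | v i < u (j + 1)} = range i := by
    ext j
    simp only [mem_filter, mem_range]
    constructor
    · rintro ⟨hj, hlt⟩
      have := (hw.interleave_right_lt_left_iff (by omega) (by omega) hi (by omega)).1 hlt
      omega
    · intro hj
      exact ⟨by omega, (hw.interleave_right_lt_left_iff (by omega) (by omega) hi (by omega)).2
        (by omega)⟩
  have := neg_one_pow_card_mul_eval_rootPoly_pos u m hcp fun j hj =>
    (hw.interleave_right_ne_left (by omega) (by simp at hj; omega) hi (by omega)).symm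
  rwa [hfilter, card_range] at this

theorem degree_rootPoly_pred_lt (hm : 1 ≤ m) (hcp : 0 < cp) (hcq : 0 < cq) :
    (rootPoly cq v (m - 1)).degree < (rootPoly cp u m).degree := by
  rw [degree_rootPoly _ _ hcp.ne', degree_rootPoly _ _ hcq.ne']
  exact_mod_cast Nat.sub_lt hm one_pos

theorem StrictAntiOn.exists_root_sub_rootPoly
    (hw : StrictAntiOn (interleave u v) (Set.Icc 2 (2 * m))) (hm : 1 ≤ m) (hcp : 0 < cp)
    (hcq : 0 < cq) {i : ℕ} (hi : 1 ≤ i) (him : i ≤ m) :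
    ∃ z, u i < z ∧ (2 ≤ i → z < v (i - 1)) ∧
      (rootPoly cp u m - rootPoly cq v (m - 1)).eval z = 0 := by
  have hq := hw.neg_one_pow_mul_eval_rootPoly_at_left_pos hcq hi him
  have hlt := degree_rootPoly_pred_lt (u := u) (v := v) hm hcp hcq
  set p := rootPoly cp u m
  set q := rootPoly cq v (m - 1)
  have hpu : p.eval (u i) = 0 := eval_rootPoly_eq_zero _ _ _ hi him
  rcases (show i = 1 ∨ 2 ≤ i by omega) with rfl | h2
  · have htop := tendsto_eval_sub_atTop_of_degree_lt hlt
      (by rw [degree_rootPoly _ _ hcp.ne']; exact_mod_cast hm) (by rwa [leadingCoeff_rootPoly])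
    have hneg : (p - q).eval (u 1) < 0 := by simpa [hpu] using hq
    obtain ⟨z, hz, hz0⟩ := intermediate_value_Ioi (p - q).continuous.continuousOn htop hneg
    exact ⟨z, hz, by omega, hz0⟩
  · have hp := hw.neg_one_pow_mul_eval_rootPoly_at_right_pos hcp (i := i - 1) (by omega)
      (by omega)
    have hqv : q.eval (v (i - 1)) = 0 := eval_rootPoly_eq_zero _ _ _ (by omega) (by omega)
    have huv : u i < v (i - 1) :=
      (hw.interleave_left_lt_right_iff hi (by omega) (by omega) (by omega)).2 (by omega)
    have hprod : (p - q).eval (u i) * (p - q).eval (v (i - 1)) < 0 := by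
      have := mul_pos_of_neg_one_pow_mul_pos _ hq hp
      simp only [eval_sub, hpu, hqv]
      linarith
    obtain ⟨z, hz, hz0⟩ :=
      exists_mem_Ioo_eq_zero_of_mul_neg huv.le (p - q).continuous.continuousOn hprod
    exact ⟨z, hz.1, fun _ => hz.2, hz0⟩

theorem StrictAntiOn.exists_root_add_rootPoly
    (hw : StrictAntiOn (interleave u v) (Set.Icc 2 (2 * m))) (hm : 1 ≤ m) (hcp : 0 < cp)
    (hcq : 0 < cq) {i : ℕ} (hi : 1 ≤ i) (him : i ≤ m) :
    ∃ z, (i ≤ m - 1 → v i < z) ∧ z < u i ∧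
      (rootPoly cp u m + rootPoly cq v (m - 1)).eval z = 0 := by
  have hq := hw.neg_one_pow_mul_eval_rootPoly_at_left_pos hcq hi him
  have hlt := degree_rootPoly_pred_lt (u := u) (v := v) hm hcp hcq
  set p := rootPoly cp u m
  set q := rootPoly cq v (m - 1)
  have hpu : p.eval (u i) = 0 := eval_rootPoly_eq_zero _ _ _ hi him
  rcases (show i = m ∨ i ≤ m - 1 by omega) with rfl | him'
  · have hbot := tendsto_neg_one_pow_mul_eval_add_atBot_of_degree_lt hlt
      (by rw [degree_rootPoly _ _ hcp.ne']; exact_mod_cast hm) (by rwa [leadingCoeff_rootPoly])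
    rw [natDegree_rootPoly _ _ hcp.ne'] at hbot
    have hneg : (-1) ^ i * (p + q).eval (u i) < 0 := by
      have hpow : (-1 : ℝ) ^ i = -(-1) ^ (i - 1) := by
        obtain ⟨k, rfl⟩ := Nat.exists_eq_add_of_le' hi
        simp [pow_succ]
      rw [eval_add, hpu, zero_add, hpow]
      linarith
    obtain ⟨z, hz, hz0⟩ := intermediate_value_Iio' (by fun_prop) hbot hneg
    exact ⟨z, by omega, hz, by simpa using hz0⟩
  · have hp := hw.neg_one_pow_mul_eval_rootPoly_at_right_pos hcp hi him'
    have hqv : q.eval (v i) = 0 := eval_rootPoly_eq_zero _ _ _ hi him'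
    have hvu : v i < u i := (hw.interleave_right_lt_left_iff hi (by omega) hi (by omega)).2 le_rfl
    have hprod : (p + q).eval (v i) * (p + q).eval (u i) < 0 := by
      simpa [hpu, hqv] using
        mul_neg_of_neg_one_pow_succ_mul_pos _ (by rwa [Nat.sub_add_cancel hi]) hq
    obtain ⟨z, hz, hz0⟩ :=
      exists_mem_Ioo_eq_zero_of_mul_neg hvu.le (p + q).continuous.continuousOn hprod
    exact ⟨z, fun _ => hz.1, hz.2, hz0⟩

end Interlacing

theorem interlacing_sum_diff (m : ℕ) (hm : 1 ≤ m)
    (u v : ℕ → ℝ) (cp cq : ℝ) (hcp : 0 < cp) (hcq : 0 < cq)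
    (p q : Polynomial ℝ)
    (hp : p = C cp * ∏ i ∈ Finset.range m, (X - C (u (i+1))))
    (hq : q = C cq * ∏ i ∈ Finset.range (m-1), (X - C (v (i+1))))
    (hint : ∀ i, 1 ≤ i → i ≤ m - 1 → u i > v i ∧ v i > u (i+1)) :
    (∃ z, u 1 < z ∧ (p - q).eval z = 0) ∧
    (∀ i, 2 ≤ i → i ≤ m → ∃ z, u i < z ∧ z < v (i-1) ∧ (p - q).eval z = 0) ∧
    (∀ i, 1 ≤ i → i ≤ m - 1 → ∃ z, v i < z ∧ z < u i ∧ (p + q).eval z = 0) ∧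
    (∃ z, z < u m ∧ (p + q).eval z = 0) ∧
    (∃ s t : Finset ℝ, s.card = m ∧ t.card = m ∧
      (∀ z ∈ s, (p - q).eval z = 0) ∧ (∀ z ∈ t, (p + q).eval z = 0) ∧
      Disjoint s t) := by
  have hw : StrictAntiOn (interleave u v) (Set.Icc 2 (2 * m)) :=
    strictAntiOn_interleave (fun i hi _ => (hint i hi (by omega)).1)
      (fun i hi _ => (hint i hi (by omega)).2)
  subst hp hq
  choose! F hFu hFv hF0 using fun i (hi : 1 ≤ i) (him : i ≤ m) =>
    hw.exists_root_sub_rootPoly hm hcp hcq hi him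
  choose! G hGv hGu hG0 using fun i (hi : 1 ≤ i) (him : i ≤ m) =>
    hw.exists_root_add_rootPoly hm hcp hcq hi him
  have hFG : StrictAntiOn (interleave F G) (Set.Icc 2 (2 * m + 1)) := strictAntiOn_interleave
    (fun i hi _ => (hGu i hi (by omega)).trans (hFu i hi (by omega)))
    (fun i hi _ => (hFv (i + 1) (by omega) (by omega) (by omega)).trans
      (hGv i hi (by omega) (by omega)))
  exact ⟨⟨F 1, hFu 1 le_rfl hm, hF0 1 le_rfl hm⟩,
    fun i h2 him => ⟨F i, hFu i (by omega) him, hFv i (by omega) him h2, hF0 i (by omega) him⟩,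
    fun i hi him => ⟨G i, hGv i hi (by omega) him, hGu i hi (by omega), hG0 i hi (by omega)⟩,
    ⟨G m, hGu m hm le_rfl, hG0 m hm le_rfl⟩,
    hFG.exists_disjoint_finsets_of_interleave hF0 hG0⟩
end

section
/- Let n = 2m−1 be odd and x_0 > x_1 > ... > x_n be given. Suppose two coefficient systems {(a_k, b_k)}_{k=0}^{n−1} and {(ã_k, b̃_k)}_{k=0}^{n−1}, both satisfying positivity (a_k > 0, ã_k > 0) and reflection (a_k = a_{n−k}, b_k = b_{n−k}, and similarly for the tilde system, for 1 ≤ k ≤ n−1), generate via the recurrence p_{k+1} + p_{k−1} = (a_k x + b_k) p_k (with p_0 = 1, p_1 = a_0 x + b_0, and analogously p̃_k) polynomial sequences both satisfying the alternation condition p_{n−k}(x_j) = (−1)^j p_k(x_j) and p̃_{n−k}(x_j) = (−1)^j p̃_k(x_j) for all 0 ≤ j, k ≤ n. Then ã_k = a_k and b̃_k = b_k for all 0 ≤ k ≤ n−1, and p̃_k = p_k for all 0 ≤ k ≤ n. -/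
/-
Both middle combinations `p m ∓ p (m - 1)` are polynomials of degree `m` whose roots are forced by
the alternation at `k = m - 1`: they vanish at the `x j` with `j` even, resp. odd. Hence the middle
pair of the tilde system is a scalar multiple `c` of the middle pair of the original one. Running
the recurrence downwards, a degree comparison shows that each step preserves this proportionality
and forces the coefficients to agree; `p 0 = 1` then gives `c = 1`. The reflection symmetry
transports the coefficients to the upper half, and the recurrence propagates equality upwards.
-/

open Polynomial Finset

theorem linear_eq_linear_iff {R : Type*} [Semiring R] {a b a' b' : R} :
    C a * X + C b = C a' * X + C b' ↔ a = a' ∧ b = b' := by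
  refine ⟨fun h => ⟨?_, ?_⟩, fun ⟨ha, hb⟩ => ha ▸ hb ▸ rfl⟩
  · simpa using congrArg (coeff · 1) h
  · simpa using congrArg (coeff · 0) h

theorem eq_C_mul_of_eval_index_eq_zero {K ι : Type*} [Field K] {f g : K[X]} {c : K}
    {v : ι → K} (s : Finset ι) (hvs : Set.InjOn v s) (hf : f.degree ≤ #s) (hg : g.degree ≤ #s)
    (hc : g.coeff #s = c * f.coeff #s) (hf0 : ∀ i ∈ s, f.eval (v i) = 0)
    (hg0 : ∀ i ∈ s, g.eval (v i) = 0) : g = C c * f := by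
  rw [← sub_eq_zero]
  refine eq_zero_of_degree_lt_of_eval_index_eq_zero s hvs ?_ fun i hi => by
    simp [hf0 i hi, hg0 i hi]
  rw [degree_lt_iff_coeff_zero]
  intro m hm
  rcases hm.eq_or_lt with rfl | hm
  · simp [hc]
  · have hlt : ∀ q : K[X], q.degree ≤ #s → q.coeff m = 0 := fun q hq =>
      coeff_eq_zero_of_degree_lt (hq.trans_lt (by exact_mod_cast hm))
    simp [hlt f hf, hlt g hg]

section

variable {K : Type*} [Field K]

structure IsThreeTermRecurrence (n : ℕ) (a b : ℕ → K) (p : ℕ → K[X]) : Prop where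
  zero : p 0 = 1
  one : p 1 = C (a 0) * X + C (b 0)
  step : ∀ k, 1 ≤ k → k ≤ n - 1 → p (k + 1) + p (k - 1) = (C (a k) * X + C (b k)) * p k

namespace IsThreeTermRecurrence

variable {n : ℕ} {a b a' b' : ℕ → K} {p q : ℕ → K[X]}

theorem succ_succ_eq (hp : IsThreeTermRecurrence n a b p) {k : ℕ} (hk : k + 2 ≤ n) :
    p (k + 2) = (C (a (k + 1)) * X + C (b (k + 1))) * p (k + 1) - p k :=
  eq_sub_of_add_eq (hp.step (k + 1) (by omega) (by omega))

theorem degree_eq (hp : IsThreeTermRecurrence n a b p) (ha : ∀ k ≤ n - 1, a k ≠ 0) :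
    ∀ k ≤ n, (p k).degree = k
  | 0, _ => by simp [hp.zero]
  | 1, hk => by rw [hp.one, degree_linear (ha 0 (by omega))]; rfl
  | k + 2, hk => by
    have hlin : (C (a (k + 1)) * X + C (b (k + 1))).degree = 1 :=
      degree_linear (ha (k + 1) (by omega))
    have hmul : ((C (a (k + 1)) * X + C (b (k + 1))) * p (k + 1)).degree = ↑(k + 2) := by
      rw [degree_mul, hlin, hp.degree_eq ha (k + 1) (by omega), add_comm]; rfl
    have hlt : (p k).degree < ((C (a (k + 1)) * X + C (b (k + 1))) * p (k + 1)).degree := by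
      rw [hmul, hp.degree_eq ha k (by omega)]
      exact_mod_cast (by omega : k < k + 2)
    rw [hp.succ_succ_eq hk, degree_sub_eq_left_of_degree_lt hlt, hmul]

theorem eq_of_coeff_eq (hp : IsThreeTermRecurrence n a b p) (hq : IsThreeTermRecurrence n a' b' q)
    (hab : ∀ k ≤ n - 1, a' k = a k ∧ b' k = b k) : ∀ k ≤ n, q k = p k
  | 0, _ => by rw [hp.zero, hq.zero]
  | 1, hk => by rw [hp.one, hq.one, (hab 0 (by omega)).1, (hab 0 (by omega)).2]
  | k + 2, hk => by
    rw [hp.succ_succ_eq hk, hq.succ_succ_eq hk, (hab (k + 1) (by omega)).1,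
      (hab (k + 1) (by omega)).2, eq_of_coeff_eq hp hq hab (k + 1) (by omega),
      eq_of_coeff_eq hp hq hab k (by omega)]

theorem coeff_eq_and_pred_eq_C_mul (hp : IsThreeTermRecurrence n a b p)
    (hq : IsThreeTermRecurrence n a' b' q) (hdp : ∀ j ≤ n, (p j).degree = j)
    (hdq : ∀ j ≤ n, (q j).degree = j) {c : K} {k : ℕ} (hk1 : 1 ≤ k) (hkn : k + 1 ≤ n)
    (h1 : q (k + 1) = C c * p (k + 1)) (h0 : q k = C c * p k) :
    (a' k = a k ∧ b' k = b k) ∧ q (k - 1) = C c * p (k - 1) := by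
  have hc : c ≠ 0 := by
    rintro rfl
    simpa [h0] using hdq k (by omega)
  have hpk : p k ≠ 0 := fun h => by simpa [h] using hdp k (by omega)
  have hrec := hq.step k hk1 (by omega)
  rw [h1, h0] at hrec
  have hdiff : q (k - 1) - C c * p (k - 1) =
      p k * (C c * ((C (a' k) * X + C (b' k)) - (C (a k) * X + C (b k)))) := by
    linear_combination hrec - C c * hp.step k hk1 (by omega)
  have hlt : (q (k - 1) - C c * p (k - 1)).degree < (p k).degree := by
    have hk' : k - 1 ≤ n := by omega
    rw [hdp k (by omega)]
    refine (degree_sub_le _ _).trans_lt (max_lt ?_ ?_)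
    · rw [hdq _ hk']; exact_mod_cast (by omega : k - 1 < k)
    · rw [degree_C_mul hc, hdp _ hk']; exact_mod_cast (by omega : k - 1 < k)
  have hzero := eq_zero_of_dvd_of_degree_lt (Dvd.intro _ hdiff.symm) hlt
  rw [hzero, eq_comm, mul_eq_zero, mul_eq_zero, C_eq_zero, sub_eq_zero] at hdiff
  exact ⟨linear_eq_linear_iff.mp ((hdiff.resolve_left hpk).resolve_left hc),
    sub_eq_zero.mp hzero⟩

theorem eq_C_mul_of_eq_C_mul_succ (hp : IsThreeTermRecurrence n a b p)
    (hq : IsThreeTermRecurrence n a' b' q) (hdp : ∀ j ≤ n, (p j).degree = j)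
    (hdq : ∀ j ≤ n, (q j).degree = j) {c : K} :
    ∀ k, k + 1 ≤ n → q (k + 1) = C c * p (k + 1) → q k = C c * p k →
      (∀ j ≤ k + 1, q j = C c * p j) ∧ ∀ j, 1 ≤ j → j ≤ k → a' j = a j ∧ b' j = b j
  | 0, _, h1, h0 => ⟨fun j hj => by interval_cases j <;> assumption, fun j _ _ => by omega⟩
  | k + 1, hk, h2, h1 => by
    obtain ⟨hab, h0⟩ := hp.coeff_eq_and_pred_eq_C_mul hq hdp hdq (by omega) hk h2 h1
    obtain ⟨heq, hcoeff⟩ := hp.eq_C_mul_of_eq_C_mul_succ hq hdp hdq k (by omega) h1 h0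
    refine ⟨fun j hj => ?_, fun j hj1 hj => ?_⟩
    · rcases hj.lt_or_eq with hj | rfl
      exacts [heq j (by omega), h2]
    · rcases hj.lt_or_eq with hj | rfl
      exacts [hcoeff j hj1 (by omega), hab]

end IsThreeTermRecurrence

def Alternates (n : ℕ) (x : ℕ → K) (p : ℕ → K[X]) : Prop :=
  ∀ j k, j ≤ n → k ≤ n → (p (n - k)).eval (x j) = (-1) ^ j * (p k).eval (x j)

variable {n k : ℕ} {x : ℕ → K} {p q : ℕ → K[X]}

theorem Alternates.eval_middle_sub (hp : Alternates n x p) (hn : n = 2 * k + 1) {r i : ℕ}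
    (hi : 2 * i + r ≤ n) : (p (k + 1) - C ((-1) ^ r) * p k).eval (x (2 * i + r)) = 0 := by
  have h := hp (2 * i + r) k hi (by omega)
  rw [show n - k = k + 1 by omega, pow_add, pow_mul, neg_one_sq, one_pow, one_mul] at h
  simp [h]

theorem degree_sub_C_mul_le_and_coeff_eq (hp : ∀ j ≤ n, (p j).degree = j) (hk : k + 1 ≤ n) (e : K) :
    (p (k + 1) - C e * p k).degree ≤ ↑(k + 1) ∧
      (p (k + 1) - C e * p k).coeff (k + 1) = (p (k + 1)).coeff (k + 1) := by
  have hlt : (C e * p k).degree < ↑(k + 1) := by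
    rw [← smul_eq_C_mul]
    refine (degree_smul_le e _).trans_lt ?_
    rw [hp k (by omega)]
    exact_mod_cast k.lt_succ_self
  refine ⟨(degree_sub_le _ _).trans (max_le (hp (k + 1) hk).le hlt.le), ?_⟩
  rw [coeff_sub, coeff_eq_zero_of_degree_lt hlt, sub_zero]

/- `r` is the parity of the nodes `x (2 * i + r)`; the sign `(-1) ^ r` treats the combinations
`p (k + 1) - p k` and `p (k + 1) + p k` at once. -/
theorem Alternates.middle_sub_eq_C_mul (hp : Alternates n x p) (hq : Alternates n x q)
    (hn : n = 2 * k + 1) (hdp : ∀ j ≤ n, (p j).degree = j) (hdq : ∀ j ≤ n, (q j).degree = j)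
    {r : ℕ} (hr : r ≤ 1) (hx : Set.InjOn (fun i => x (2 * i + r)) (range (k + 1))) :
    q (k + 1) - C ((-1) ^ r) * q k =
      C ((q (k + 1)).coeff (k + 1) / (p (k + 1)).coeff (k + 1)) *
        (p (k + 1) - C ((-1) ^ r) * p k) := by
  have hk : k + 1 ≤ n := by omega
  obtain ⟨hpdeg, hpcoeff⟩ := degree_sub_C_mul_le_and_coeff_eq hdp hk ((-1) ^ r)
  obtain ⟨hqdeg, hqcoeff⟩ := degree_sub_C_mul_le_and_coeff_eq hdq hk ((-1) ^ r)
  have hlc : (p (k + 1)).coeff (k + 1) ≠ 0 := coeff_ne_zero_of_eq_degree (hdp (k + 1) (by omega))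
  have hi : ∀ i ∈ range (k + 1), 2 * i + r ≤ n := fun i hi => by
    rw [mem_range] at hi; omega
  refine eq_C_mul_of_eval_index_eq_zero (range (k + 1)) hx ?_ ?_ ?_
    (fun i hi' => hp.eval_middle_sub hn (hi i hi')) (fun i hi' => hq.eval_middle_sub hn (hi i hi'))
  all_goals rw [card_range]
  · exact hpdeg
  · exact hqdeg
  · rw [hpcoeff, hqcoeff, div_mul_cancel₀ _ hlc]

theorem Alternates.exists_middle_eq_C_mul [NeZero (2 : K)] (hp : Alternates n x p)
    (hq : Alternates n x q) (hn : n = 2 * k + 1) (hx : Set.InjOn x (Set.Iic n))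
    (hdp : ∀ j ≤ n, (p j).degree = j) (hdq : ∀ j ≤ n, (q j).degree = j) :
    ∃ c, q (k + 1) = C c * p (k + 1) ∧ q k = C c * p k := by
  have hinj : ∀ r ≤ 1, Set.InjOn (fun i => x (2 * i + r)) (range (k + 1)) :=
    fun r hr i hi j hj hij => by
      simp only [coe_range, Set.mem_Iio] at hi hj
      have := hx (Set.mem_Iic.mpr (by omega)) (Set.mem_Iic.mpr (by omega)) hij
      omega
  have heven := hp.middle_sub_eq_C_mul hq hn hdp hdq (r := 0) (by omega) (hinj 0 (by omega))
  have hodd := hp.middle_sub_eq_C_mul hq hn hdp hdq (r := 1) (by omega) (hinj 1 (by omega))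
  simp only [pow_zero, pow_one, map_one, map_neg, one_mul, neg_one_mul, sub_neg_eq_add]
    at heven hodd
  have h2 : (2 : K[X]) ≠ 0 := by exact_mod_cast C_ne_zero.mpr (two_ne_zero (α := K))
  refine ⟨(q (k + 1)).coeff (k + 1) / (p (k + 1)).coeff (k + 1),
    mul_left_cancel₀ h2 ?_, mul_left_cancel₀ h2 ?_⟩
  · linear_combination heven + hodd
  · linear_combination hodd - heven

end

theorem uniqueness_odd (n m : ℕ) (hm : 1 ≤ m) (hn : n = 2*m - 1)
    (x : ℕ → ℝ) (hx : ∀ j, j < n → x (j+1) < x j)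
    (a b ta tb : ℕ → ℝ) (p tp : ℕ → Polynomial ℝ)
    (hp0 : p 0 = 1) (hp1 : p 1 = C (a 0) * X + C (b 0))
    (hrec : ∀ k, 1 ≤ k → k ≤ n - 1 →
      p (k+1) + p (k-1) = (C (a k) * X + C (b k)) * p k)
    (hpos : ∀ k, k ≤ n - 1 → 0 < a k)
    (hrefl : ∀ k, 1 ≤ k → k ≤ n - 1 → a k = a (n - k) ∧ b k = b (n - k))
    (htp0 : tp 0 = 1) (htp1 : tp 1 = C (ta 0) * X + C (tb 0))
    (htrec : ∀ k, 1 ≤ k → k ≤ n - 1 →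
      tp (k+1) + tp (k-1) = (C (ta k) * X + C (tb k)) * tp k)
    (htpos : ∀ k, k ≤ n - 1 → 0 < ta k)
    (htrefl : ∀ k, 1 ≤ k → k ≤ n - 1 → ta k = ta (n - k) ∧ tb k = tb (n - k))
    (halt : ∀ j k, j ≤ n → k ≤ n →
      (p (n - k)).eval (x j) = (-1)^j * (p k).eval (x j))
    (htalt : ∀ j k, j ≤ n → k ≤ n →
      (tp (n - k)).eval (x j) = (-1)^j * (tp k).eval (x j)) :
    (∀ k, k ≤ n - 1 → ta k = a k ∧ tb k = b k) ∧
    (∀ k, k ≤ n → tp k = p k) := by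
  obtain ⟨k, rfl⟩ : ∃ k, m = k + 1 := ⟨m - 1, by omega⟩
  replace hn : n = 2 * k + 1 := by omega
  have hP : IsThreeTermRecurrence n a b p := ⟨hp0, hp1, hrec⟩
  have hQ : IsThreeTermRecurrence n ta tb tp := ⟨htp0, htp1, htrec⟩
  have hdp := hP.degree_eq fun j hj => (hpos j hj).ne'
  have hdq := hQ.degree_eq fun j hj => (htpos j hj).ne'
  obtain ⟨c, hc1, hc0⟩ := Alternates.exists_middle_eq_C_mul halt htalt hn
    (strictAntiOn_Iic_of_succ_lt hx).injOn hdp hdq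
  obtain ⟨heq, hlow⟩ := hP.eq_C_mul_of_eq_C_mul_succ hQ hdp hdq k (by omega) hc1 hc0
  have hc : c = 1 := C_injective (by simpa [hp0, htp0] using (heq 0 (by omega)).symm)
  have hzero : ta 0 = a 0 ∧ tb 0 = b 0 :=
    linear_eq_linear_iff.mp (by simpa [hp1, htp1, hc] using heq 1 (by omega))
  have hcoeff : ∀ j ≤ n - 1, ta j = a j ∧ tb j = b j := by
    intro j hj
    rcases Nat.eq_zero_or_pos j with rfl | hj0
    · exact hzero
    rcases le_or_gt j k with hjk | hjk
    · exact hlow j hj0 hjk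
    rw [(hrefl j hj0 hj).1, (hrefl j hj0 hj).2, (htrefl j hj0 hj).1, (htrefl j hj0 hj).2]
    exact hlow (n - j) (by omega) (by omega)
  exact ⟨hcoeff, hP.eq_of_coeff_eq hQ hcoeff⟩
end

section
/- With G as above and K_δ(x,y; x_s,y_v) = Σ_{j=0}^{n−1} a_j p_j(x) p_j(x_s) Σ_{k=0}^{n−j+δ} c_k q_k(y) q_k(y_v) and J(x,y; x_s,y_v) = a_0 p_n(x) p_n(x_s) [Σ_{k=0}^{σ−δ−1} c_k q_k(y) q_k(y_v) + Σ_{k=0}^{δ} c_k q_k(y) q_k(y_v)] for 0 ≤ δ ≤ σ−1, the following identity holds at any pair of same-parity nodes (x_r,y_u), (x_s,y_v) ∈ S_τ: (y_u − y_v) · [K_δ(x_r,y_u; x_s,y_v) + K_{σ−δ−1}(x_r,y_u; x_s,y_v) + J(x_r,y_u; x_s,y_v)] = 0. -/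
/-!
Multiplying by `y_u - y_v` turns every inner `q`-sum into a Casoratian
`F m = q_{m+1}(y_u) q_m(y_v) - q_m(y_u) q_{m+1}(y_v)` (Christoffel–Darboux), so the bracket
becomes `∑_{j=0}^{n} V_j G_j` with `V_j = a_j p_j(x_r) p_j(x_s)`, where `a_n` is read as `a_0`
so that `J` is the term `j = n`, and `G_j = F(n-j+δ) + F(n-j+σ-δ-1)`.
With `ε = (-1)^(u+v) = (-1)^(r+s)`, the reflection symmetries give `V_{n-j} = ε V_j` and
`G_j = -ε G_{n-j}`, so the summand is odd under `j ↦ n - j` and the sum vanishes.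
-/

open Polynomial Finset

/-- `K_δ(x,y;x_s,y_v)` of the paper, as a real-valued function. -/
noncomputable def Kfun (n δ : ℕ) (a c : ℕ → ℝ) (p q : ℕ → Polynomial ℝ)
    (xs yv X Y : ℝ) : ℝ :=
  ∑ j ∈ Finset.range n, a j * (p j).eval X * (p j).eval xs *
    ∑ k ∈ Finset.range (n - j + δ + 1), c k * (q k).eval Y * (q k).eval yv

/-- `J(x,y;x_s,y_v)` of the paper (depending on `δ`), as a real-valued function. -/
noncomputable def Jfun (n σ δ : ℕ) (a c : ℕ → ℝ) (p q : ℕ → Polynomial ℝ)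
    (xs yv X Y : ℝ) : ℝ :=
  a 0 * (p n).eval X * (p n).eval xs *
    ((∑ k ∈ Finset.range (σ - δ), c k * (q k).eval Y * (q k).eval yv) +
     (∑ k ∈ Finset.range (δ + 1), c k * (q k).eval Y * (q k).eval yv))

theorem neg_one_pow_add_eq_of_add_mod_two_eq {R : Type*} [Ring R] {r s u v : ℕ}
    (h : (r + u) % 2 = (s + v) % 2) : (-1 : R) ^ (r + s) = (-1) ^ (u + v) := by
  rw [neg_one_pow_eq_pow_mod_two, neg_one_pow_eq_pow_mod_two (u + v)]
  congr 1
  omega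

theorem sum_range_succ_eq_zero_of_reflect {R : Type*} [NonAssocRing R] [NoZeroDivisors R]
    [CharZero R] {f : ℕ → R} {n : ℕ} (h : ∀ j ≤ n, f (n - j) = -f j) :
    ∑ j ∈ range (n + 1), f j = 0 := by
  rw [← CharZero.eq_neg_self_iff, ← sum_neg_distrib]
  calc ∑ j ∈ range (n + 1), f j = ∑ j ∈ range (n + 1), f (n + 1 - 1 - j) :=
        (sum_range_reflect f (n + 1)).symm
    _ = ∑ j ∈ range (n + 1), -f j :=
        sum_congr rfl fun j hj => by
          rw [Nat.add_sub_cancel, h j (Nat.lt_succ_iff.mp (mem_range.mp hj))]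

theorem update_reflect {α : Type*} {a : ℕ → α} {n j : ℕ}
    (ha : ∀ k, 1 ≤ k → k ≤ n - 1 → a k = a (n - k)) (hj : j ≤ n) :
    Function.update a n (a 0) (n - j) = Function.update a n (a 0) j := by
  rcases (show j = 0 ∨ j = n ∨ (1 ≤ j ∧ j ≤ n - 1) by omega) with rfl | rfl | ⟨h1, h2⟩
  · simp [Function.update_apply]
  · simp [Function.update_apply]
  · rw [Function.update_of_ne (by omega), Function.update_of_ne (by omega), ha j h1 h2]

section Casoratian

variable {R : Type*} [CommRing R]

noncomputable def casoratian (q : ℕ → R[X]) (y y' : R) (m : ℕ) : R :=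
  (q (m + 1)).eval y * (q m).eval y' - (q m).eval y * (q (m + 1)).eval y'

theorem christoffel_darboux {q : ℕ → R[X]} {c d : ℕ → R} {m : ℕ} (hq0 : q 0 = 1)
    (hq1 : q 1 = C (c 0) * X + C (d 0))
    (hqrec : ∀ k, 1 ≤ k → k ≤ m → q (k + 1) + q (k - 1) = (C (c k) * X + C (d k)) * q k)
    (y y' : R) :
    (y - y') * ∑ k ∈ range (m + 1), c k * (q k).eval y * (q k).eval y' =
      casoratian q y y' m := by
  induction m with
  | zero =>
    simp only [casoratian, zero_add, sum_range_one, hq0, hq1, eval_one, eval_add, eval_mul,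
      eval_C, eval_X]
    ring
  | succ m ih =>
    rw [sum_range_succ, mul_add, ih fun k h1 h2 => hqrec k h1 (by omega)]
    have hrec := hqrec (m + 1) (by omega) le_rfl
    have hy := congrArg (eval y) hrec
    have hy' := congrArg (eval y') hrec
    simp only [eval_add, eval_mul, eval_C, eval_X, Nat.add_sub_cancel] at hy hy'
    simp only [casoratian]
    linear_combination (q (m + 1)).eval y * hy' - (q (m + 1)).eval y' * hy

theorem casoratian_reflect {q : ℕ → R[X]} {N m : ℕ} {y y' e e' : R} (hm : m < N)
    (hy : ∀ k ≤ N, (q (N - k)).eval y = e * (q k).eval y)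
    (hy' : ∀ k ≤ N, (q (N - k)).eval y' = e' * (q k).eval y') :
    casoratian q y y' (N - 1 - m) = -(e * e') * casoratian q y y' m := by
  rw [casoratian, show N - 1 - m + 1 = N - m by omega, show N - 1 - m = N - (m + 1) by omega,
    hy m hm.le, hy (m + 1) hm, hy' m hm.le, hy' (m + 1) hm, casoratian]
  ring

end Casoratian

theorem mul_Kfun_eq_sum_casoratian {n δ : ℕ} {a c d : ℕ → ℝ} {p q : ℕ → ℝ[X]}
    (hq0 : q 0 = 1) (hq1 : q 1 = C (c 0) * X + C (d 0))
    (hqrec : ∀ k, 1 ≤ k → k ≤ n + δ → q (k + 1) + q (k - 1) = (C (c k) * X + C (d k)) * q k)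
    (x₀ y₀ x y : ℝ) :
    (y - y₀) * Kfun n δ a c p q x₀ y₀ x y =
      ∑ j ∈ range n, a j * (p j).eval x * (p j).eval x₀ * casoratian q y y₀ (n - j + δ) := by
  rw [Kfun, mul_sum]
  refine sum_congr rfl fun j _ => ?_
  rw [← christoffel_darboux hq0 hq1 (fun k h1 h2 => hqrec k h1 (by omega))]
  ring

theorem mul_Jfun_eq_casoratian {n σ δ : ℕ} {a c d : ℕ → ℝ} {p q : ℕ → ℝ[X]} (hδ : δ < σ)
    (hq0 : q 0 = 1) (hq1 : q 1 = C (c 0) * X + C (d 0))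
    (hqrec : ∀ k, 1 ≤ k → k < σ → q (k + 1) + q (k - 1) = (C (c k) * X + C (d k)) * q k)
    (x₀ y₀ x y : ℝ) :
    (y - y₀) * Jfun n σ δ a c p q x₀ y₀ x y =
      a 0 * (p n).eval x * (p n).eval x₀ *
        (casoratian q y y₀ (σ - δ - 1) + casoratian q y y₀ δ) := by
  rw [Jfun, ← christoffel_darboux hq0 hq1 (m := σ - δ - 1) (fun k h1 h2 => hqrec k h1 (by omega)),
    ← christoffel_darboux hq0 hq1 (m := δ) (fun k h1 h2 => hqrec k h1 (by omega)),
    Nat.sub_add_cancel (by omega : 1 ≤ σ - δ)]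
  ring

theorem mul_Kfun_add_Kfun_add_Jfun {n σ δ : ℕ} {a c d : ℕ → ℝ} {p q : ℕ → ℝ[X]} (hδ : δ < σ)
    (hq0 : q 0 = 1) (hq1 : q 1 = C (c 0) * X + C (d 0))
    (hqrec : ∀ k, 1 ≤ k → k ≤ n + σ - 1 → q (k + 1) + q (k - 1) = (C (c k) * X + C (d k)) * q k)
    (x₀ y₀ x y : ℝ) :
    (y - y₀) * (Kfun n δ a c p q x₀ y₀ x y + Kfun n (σ - δ - 1) a c p q x₀ y₀ x y +
        Jfun n σ δ a c p q x₀ y₀ x y) =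
      ∑ j ∈ range (n + 1), Function.update a n (a 0) j * (p j).eval x * (p j).eval x₀ *
        (casoratian q y y₀ (n - j + δ) + casoratian q y y₀ (n - j + (σ - δ - 1))) := by
  rw [mul_add, mul_add, mul_Kfun_eq_sum_casoratian hq0 hq1 (fun k h1 h2 => hqrec k h1 (by omega)),
    mul_Kfun_eq_sum_casoratian hq0 hq1 (fun k h1 h2 => hqrec k h1 (by omega)),
    mul_Jfun_eq_casoratian hδ hq0 hq1 (fun k h1 h2 => hqrec k h1 (by omega)), sum_range_succ,
    ← sum_add_distrib]
  simp only [Function.update_self, Nat.sub_self, zero_add]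
  congr 1
  · refine sum_congr rfl fun j hj => ?_
    rw [Function.update_of_ne (mem_range.mp hj).ne]
    ring
  · ring

theorem y_telescoping_identity_general (n σ τ δ : ℕ) (hσ : 1 ≤ σ)
    (hδ : δ ≤ σ - 1)
    (x y : ℕ → ℝ)
    (a b c d : ℕ → ℝ) (p q : ℕ → Polynomial ℝ)
    (hq0 : q 0 = 1) (hq1 : q 1 = C (c 0) * X + C (d 0))
    (hqrec : ∀ k, 1 ≤ k → k ≤ n + σ - 1 →
      q (k+1) + q (k-1) = (C (c k) * X + C (d k)) * q k)
    (harefl : ∀ k, 1 ≤ k → k ≤ n - 1 → a k = a (n - k) ∧ b k = b (n - k))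
    (hxalt : ∀ j r, j ≤ n → r ≤ n →
      (p (n - j)).eval (x r) = (-1)^r * (p j).eval (x r))
    (hyalt : ∀ k u, k ≤ n + σ → u ≤ n + σ →
      (q (n + σ - k)).eval (y u) = (-1)^u * (q k).eval (y u))
    (r u s v : ℕ) (hr : r ≤ n) (hu : u ≤ n + σ) (hs : s ≤ n) (hv : v ≤ n + σ)
    (hru : (r + u) % 2 = τ) (hsv : (s + v) % 2 = τ) :
    (y u - y v) *
      (Kfun n δ a c p q (x s) (y v) (x r) (y u) +
       Kfun n (σ - δ - 1) a c p q (x s) (y v) (x r) (y u) +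
       Jfun n σ δ a c p q (x s) (y v) (x r) (y u)) = 0 := by
  set ε : ℝ := (-1) ^ (u + v)
  have hrs : (-1 : ℝ) ^ (r + s) = ε := neg_one_pow_add_eq_of_add_mod_two_eq (hru.trans hsv.symm)
  set F := casoratian q (y u) (y v)
  have hF : ∀ m < n + σ, F (n + σ - 1 - m) = -ε * F m := fun m hm =>
    (casoratian_reflect hm (hyalt · u · hu) (hyalt · v · hv)).trans (by rw [← pow_add])
  rw [mul_Kfun_add_Kfun_add_Jfun (by omega) hq0 hq1 hqrec]
  refine sum_range_succ_eq_zero_of_reflect fun j hj => ?_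
  rw [Nat.sub_sub_self hj]
  have hV : Function.update a n (a 0) (n - j) * (p (n - j)).eval (x r) * (p (n - j)).eval (x s) =
      ε * (Function.update a n (a 0) j * (p j).eval (x r) * (p j).eval (x s)) := by
    rw [update_reflect (fun k h1 h2 => (harefl k h1 h2).1) hj, hxalt j r hj hr, hxalt j s hj hs,
      ← hrs, pow_add]
    ring
  have hG : F (n - j + δ) + F (n - j + (σ - δ - 1)) = -ε * (F (j + δ) + F (j + (σ - δ - 1))) := by
    rw [show n - j + δ = n + σ - 1 - (j + (σ - δ - 1)) by omega,
      show n - j + (σ - δ - 1) = n + σ - 1 - (j + δ) by omega, hF _ (by omega), hF _ (by omega)]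
    ring
  rw [hV, hG]
  ring

theorem y_telescoping_identity (n σ τ δ : ℕ) (hτ : τ ≤ 1) (hσ : 1 ≤ σ)
    (hδ : δ ≤ σ - 1)
    (x y : ℕ → ℝ)
    (hx : ∀ j, j < n → x (j+1) < x j)
    (hy : ∀ j, j < n + σ → y (j+1) < y j)
    (a b c d : ℕ → ℝ) (p q : ℕ → Polynomial ℝ)
    (hp0 : p 0 = 1) (hp1 : p 1 = C (a 0) * X + C (b 0))
    (hprec : ∀ k, 1 ≤ k → k ≤ n - 1 →
      p (k+1) + p (k-1) = (C (a k) * X + C (b k)) * p k)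
    (hq0 : q 0 = 1) (hq1 : q 1 = C (c 0) * X + C (d 0))
    (hqrec : ∀ k, 1 ≤ k → k ≤ n + σ - 1 →
      q (k+1) + q (k-1) = (C (c k) * X + C (d k)) * q k)
    (hapos : ∀ k, k ≤ n - 1 → 0 < a k)
    (hcpos : ∀ k, k ≤ n + σ - 1 → 0 < c k)
    (harefl : ∀ k, 1 ≤ k → k ≤ n - 1 → a k = a (n - k) ∧ b k = b (n - k))
    (hcrefl : ∀ k, 1 ≤ k → k ≤ n + σ - 1 →
      c k = c (n + σ - k) ∧ d k = d (n + σ - k))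
    (hxalt : ∀ j r, j ≤ n → r ≤ n →
      (p (n - j)).eval (x r) = (-1)^r * (p j).eval (x r))
    (hyalt : ∀ k u, k ≤ n + σ → u ≤ n + σ →
      (q (n + σ - k)).eval (y u) = (-1)^u * (q k).eval (y u))
    (r u s v : ℕ) (hr : r ≤ n) (hu : u ≤ n + σ) (hs : s ≤ n) (hv : v ≤ n + σ)
    (hru : (r + u) % 2 = τ) (hsv : (s + v) % 2 = τ) :
    (y u - y v) *
      (Kfun n δ a c p q (x s) (y v) (x r) (y u) +
       Kfun n (σ - δ - 1) a c p q (x s) (y v) (x r) (y u) +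
       Jfun n σ δ a c p q (x s) (y v) (x r) (y u)) = 0 :=
  y_telescoping_identity_general n σ τ δ hσ hδ x y a b c d p q hq0 hq1 hqrec harefl hxalt hyalt r u
    s v hr hu hs hv hru hsv
end

section
/- In the setting with σ = 2δ even, suppose {p_j}_{j=0}^n and {q_k}_{k=0}^{n+σ} satisfy the alternation conditions p_{n−j}(x_r) = (−1)^r p_j(x_r) and q_{n+σ−k}(y_u) = (−1)^u q_k(y_u) at the nodes. Then for each τ ∈ {0,1}, each 0 ≤ j ≤ n, and every node (x_r, y_u) ∈ S_τ, the polynomial F_j(x,y) = p_{n−j}(x) q_{j+δ}(y) − (−1)^τ p_j(x) q_{n+δ−j}(y) satisfies F_j(x_r, y_u) = 0; i.e., F_j is a bivariate vanishing polynomial for S_τ lying in P_{n+δ}(x,y). -/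
/-!
At a node `(x_r, y_u)` the alternation relations give
`p_{n-j}(x_r) q_{j+δ}(y_u) = (-1)^(r+u) p_j(x_r) q_{n+σ-(j+δ)}(y_u)`, and `σ = 2δ` turns the
reflected index `n+σ-(j+δ)` into `n+δ-j`; on `S_τ` the sign `(-1)^(r+u)` is `(-1)^τ`.
-/

open Polynomial

/-- View a univariate real polynomial as a bivariate polynomial in variable `i`. -/
noncomputable def toMv2 (i : Fin 2) (f : Polynomial ℝ) : MvPolynomial (Fin 2) ℝ :=
  Polynomial.eval₂ MvPolynomial.C (MvPolynomial.X i) f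

theorem toMv2_eq_toMvPolynomial (i : Fin 2) (f : ℝ[X]) : toMv2 i f = f.toMvPolynomial i := rfl

namespace Polynomial

variable {R σ : Type*} [CommSemiring R]

theorem totalDegree_toMvPolynomial_le (i : σ) (p : R[X]) :
    (p.toMvPolynomial i).totalDegree ≤ p.natDegree := by
  rw [toMvPolynomial, aeval_eq_sum_range]
  refine (MvPolynomial.totalDegree_finsetSum _ _).trans (Finset.sup_le fun k hk => ?_)
  rw [MvPolynomial.X_pow_eq_monomial, MvPolynomial.smul_monomial]
  calc _ ≤ _ := MvPolynomial.totalDegree_monomial_le _ _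
    _ = k := by simp
    _ ≤ p.natDegree := Nat.lt_succ_iff.mp (Finset.mem_range.mp hk)

theorem totalDegree_toMvPolynomial_mul_le (i k : σ) (f g : R[X]) :
    (f.toMvPolynomial i * g.toMvPolynomial k).totalDegree ≤ f.natDegree + g.natDegree :=
  (MvPolynomial.totalDegree_mul _ _).trans
    (add_le_add (totalDegree_toMvPolynomial_le i f) (totalDegree_toMvPolynomial_le k g))

end Polynomial

theorem F_vanishing_general (n σ δ τ : ℕ) (hσ : σ = 2 * δ)
    (x y : ℕ → ℝ)
    (p q : ℕ → Polynomial ℝ)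
    (hpdeg : ∀ j, j ≤ n → (p j).natDegree = j)
    (hqdeg : ∀ k, k ≤ n + σ → (q k).natDegree = k)
    (hxalt : ∀ j r, j ≤ n → r ≤ n →
      (p (n - j)).eval (x r) = (-1)^r * (p j).eval (x r))
    (hyalt : ∀ k u, k ≤ n + σ → u ≤ n + σ →
      (q (n + σ - k)).eval (y u) = (-1)^u * (q k).eval (y u))
    (j : ℕ) (hj : j ≤ n) :
    (toMv2 0 (p (n - j)) * toMv2 1 (q (j + δ)) -
      MvPolynomial.C ((-1 : ℝ)^τ) * (toMv2 0 (p j) * toMv2 1 (q (n + δ - j)))).totalDegree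
        ≤ n + δ ∧
    ∀ r u, r ≤ n → u ≤ n + σ → (r + u) % 2 = τ →
      MvPolynomial.eval ![x r, y u]
        (toMv2 0 (p (n - j)) * toMv2 1 (q (j + δ)) -
          MvPolynomial.C ((-1 : ℝ)^τ) * (toMv2 0 (p j) * toMv2 1 (q (n + δ - j)))) = 0 := by
  simp only [toMv2_eq_toMvPolynomial]
  refine ⟨?_, fun r u hr hu hru => ?_⟩
  · have hleft := totalDegree_toMvPolynomial_mul_le (0 : Fin 2) 1 (p (n - j)) (q (j + δ))
    have hright := totalDegree_toMvPolynomial_mul_le (0 : Fin 2) 1 (p j) (q (n + δ - j))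
    rw [hpdeg _ (Nat.sub_le n j), hqdeg _ (by omega)] at hleft
    rw [hpdeg j hj, hqdeg _ (by omega)] at hright
    refine (MvPolynomial.totalDegree_sub _ _).trans (max_le (by omega) ?_)
    refine (MvPolynomial.totalDegree_mul _ _).trans ?_
    rw [MvPolynomial.totalDegree_C, zero_add]
    omega
  · have hp := hxalt j r hj hr
    have hq := hyalt (n + δ - j) u (by omega) hu
    rw [show n + σ - (n + δ - j) = j + δ by omega] at hq
    have hsign : (-1 : ℝ) ^ r * (-1) ^ u = (-1) ^ τ := by
      rw [← pow_add, neg_one_pow_eq_pow_mod_two, hru]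
    simp only [map_sub, map_mul, MvPolynomial.eval_toMvPolynomial, MvPolynomial.eval_C,
      Matrix.cons_val_zero, Matrix.cons_val_one, hp, hq]
    linear_combination (eval (x r) (p j) * eval (y u) (q (n + δ - j))) * hsign

theorem F_vanishing (n σ δ τ : ℕ) (hσ : σ = 2 * δ) (hτ : τ ≤ 1)
    (x y : ℕ → ℝ)
    (hx : ∀ j, j < n → x (j+1) < x j)
    (hy : ∀ j, j < n + σ → y (j+1) < y j)
    (p q : ℕ → Polynomial ℝ)
    (hpdeg : ∀ j, j ≤ n → (p j).natDegree = j)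
    (hqdeg : ∀ k, k ≤ n + σ → (q k).natDegree = k)
    (hxalt : ∀ j r, j ≤ n → r ≤ n →
      (p (n - j)).eval (x r) = (-1)^r * (p j).eval (x r))
    (hyalt : ∀ k u, k ≤ n + σ → u ≤ n + σ →
      (q (n + σ - k)).eval (y u) = (-1)^u * (q k).eval (y u))
    (j : ℕ) (hj : j ≤ n) :
    (toMv2 0 (p (n - j)) * toMv2 1 (q (j + δ)) -
      MvPolynomial.C ((-1 : ℝ)^τ) * (toMv2 0 (p j) * toMv2 1 (q (n + δ - j)))).totalDegree
        ≤ n + δ ∧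
    ∀ r u, r ≤ n → u ≤ n + σ → (r + u) % 2 = τ →
      MvPolynomial.eval ![x r, y u]
        (toMv2 0 (p (n - j)) * toMv2 1 (q (j + δ)) -
          MvPolynomial.C ((-1 : ℝ)^τ) * (toMv2 0 (p j) * toMv2 1 (q (n + δ - j)))) = 0 :=
  F_vanishing_general n σ δ τ hσ x y p q hpdeg hqdeg hxalt hyalt j hj
end

section
/- Let n = 2m−1 be odd and σ = 2δ even, and let Q = V + span{p_{n−j}(x) q_{j+δ}(y) − (−1)^τ p_j(x) q_{n+δ−j}(y) : 0 ≤ j ≤ m−1}, where V = span{(x−x_0)⋯(x−x_n) x^j y^k : j+k ≤ δ−1}. Then Q is a subspace of P_{n+δ}(x,y) consisting of polynomials vanishing at all nodes of S_τ, and dim Q = δ(δ+1)/2 + m = (n+δ+1)(n+δ+2)/2 − (n+1)(n+σ+1)/2. -/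
/-!
Degrees and vanishing are checked on the generators. On the nodes, the alternation conditions
turn `p_{n-j}(x_r) q_{j+δ}(y_u)` into `(-1)^(r+u) p_j(x_r) q_{n+δ-j}(y_u)`, which cancels the
second term exactly when `r + u ≡ τ (mod 2)`; every element of `V` carries the factor
`(x - x_0)⋯(x - x_n)`. For the dimension, the generators are linearly independent: `V` is
`(x - x_0)⋯(x - x_n)` times independent monomials and contains no monomial `x^c y^d` with
`d ≥ δ`, while the coefficient of `x^(n-i) y^(i+δ)` in the `j`-th new generator is the product
of leading coefficients if `i = j` and zero otherwise, by the degree conditions.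
-/

open Polynomial Finset

/-- The fixed univariate node polynomial `(x-x_0)⋯(x-x_n)` viewed as a bivariate
polynomial in the first variable. -/
noncomputable def nodePoly (n : ℕ) (x : ℕ → ℝ) : MvPolynomial (Fin 2) ℝ :=
  ∏ i ∈ Finset.range (n+1), (MvPolynomial.X 0 - MvPolynomial.C (x i))

/-- The generators `(x-x_0)⋯(x-x_n) x^j y^k`, `j + k ≤ δ - 1`, of the subspace `V`. -/
noncomputable def Vgens (n δ : ℕ) (x : ℕ → ℝ) : Set (MvPolynomial (Fin 2) ℝ) :=
  {g | ∃ j k : ℕ, j + k < δ ∧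
    g = nodePoly n x * MvPolynomial.X 0 ^ j * MvPolynomial.X 1 ^ k}

/-- The vanishing polynomial `p_{n-j}(x) q_{j+δ}(y) - (-1)^τ p_j(x) q_{n+δ-j}(y)`. -/
noncomputable def Fpoly (n δ τ : ℕ) (p q : ℕ → Polynomial ℝ) (j : ℕ) :
    MvPolynomial (Fin 2) ℝ :=
  toMv2 0 (p (n - j)) * toMv2 1 (q (j + δ)) -
    MvPolynomial.C ((-1 : ℝ)^τ) * (toMv2 0 (p j) * toMv2 1 (q (n + δ - j)))

noncomputable abbrev bideg (c d : ℕ) : Fin 2 →₀ ℕ := Finsupp.single 0 c + Finsupp.single 1 d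

section Span

variable {σ R : Type*} [CommRing R] {s : Set (MvPolynomial σ R)} {P : MvPolynomial σ R}

theorem MvPolynomial.totalDegree_le_of_mem_span {d : ℕ}
    (hs : ∀ g ∈ s, g.totalDegree ≤ d) (hP : P ∈ Submodule.span R s) : P.totalDegree ≤ d :=
  (mem_restrictTotalDegree σ d P).1 <|
    Submodule.span_le.2 (fun g hg => (mem_restrictTotalDegree σ d g).2 (hs g hg)) hP

theorem MvPolynomial.eval_eq_zero_of_mem_span {v : σ → R}
    (hs : ∀ g ∈ s, eval v g = 0) (hP : P ∈ Submodule.span R s) : eval v P = 0 := by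
  have : Submodule.span R s ≤ LinearMap.ker (aeval v).toLinearMap :=
    Submodule.span_le.2 fun g hg => by simpa [MvPolynomial.coe_aeval_eq_eval] using hs g hg
  simpa [MvPolynomial.coe_aeval_eq_eval] using this hP

end Span

theorem Polynomial.coeff_ne_zero_of_natDegree_eq {R : Type*} [Semiring R] {f : R[X]} {k : ℕ}
    (h : f.natDegree = k) (hk : k ≠ 0) : f.coeff k ≠ 0 :=
  h ▸ leadingCoeff_ne_zero.2 (ne_zero_of_natDegree_gt (Nat.pos_of_ne_zero (h ▸ hk)))

theorem neg_one_pow_eq_of_mod_two_eq {R : Type*} [Ring R] {r u τ : ℕ} (h : (r + u) % 2 = τ) :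
    (-1 : R) ^ r = (-1) ^ τ * (-1) ^ u := by
  rw [← pow_add, neg_one_pow_eq_pow_mod_two, neg_one_pow_eq_pow_mod_two (τ + u)]
  congr 1
  omega

theorem eval_toMv2 (v : Fin 2 → ℝ) (i : Fin 2) (f : ℝ[X]) :
    MvPolynomial.eval v (toMv2 i f) = f.eval (v i) := by
  rw [toMv2, Polynomial.hom_eval₂]
  simp [Polynomial.eval₂_eq_sum, Polynomial.eval_eq_sum]

theorem totalDegree_toMv2_le (i : Fin 2) (f : ℝ[X]) :
    (toMv2 i f).totalDegree ≤ f.natDegree := by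
  rw [toMv2, Polynomial.eval₂_eq_sum, Polynomial.sum]
  refine (MvPolynomial.totalDegree_finsetSum _ _).trans (Finset.sup_le fun e he => ?_)
  refine (MvPolynomial.totalDegree_mul _ _).trans ?_
  simpa [MvPolynomial.totalDegree_C, MvPolynomial.totalDegree_X_pow]
    using le_natDegree_of_mem_supp e he

theorem totalDegree_toMv2_mul_toMv2_le (f g : ℝ[X]) :
    (toMv2 0 f * toMv2 1 g).totalDegree ≤ f.natDegree + g.natDegree :=
  (MvPolynomial.totalDegree_mul _ _).trans
    (add_le_add (totalDegree_toMv2_le 0 f) (totalDegree_toMv2_le 1 g))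

theorem coeff_toMv2_mul_toMv2 (f g : ℝ[X]) (c d : ℕ) :
    MvPolynomial.coeff (bideg c d) (toMv2 0 f * toMv2 1 g) = f.coeff c * g.coeff d := by
  induction f using Polynomial.induction_on' with
  | add f₁ f₂ h₁ h₂ => simp only [toMv2, eval₂_add, add_mul, MvPolynomial.coeff_add,
      Polynomial.coeff_add] at *; rw [h₁, h₂]
  | monomial e a =>
  induction g using Polynomial.induction_on' with
  | add g₁ g₂ h₁ h₂ => simp only [toMv2, eval₂_add, mul_add, MvPolynomial.coeff_add,
      Polynomial.coeff_add] at *; rw [h₁, h₂]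
  | monomial e' b =>
    simp only [toMv2, eval₂_monomial, MvPolynomial.C_mul_X_pow_eq_monomial,
      MvPolynomial.monomial_mul, MvPolynomial.coeff_monomial, Polynomial.coeff_monomial]
    by_cases h : e = c <;> by_cases h' : e' = d <;>
      simp [h, h', Finsupp.ext_iff, Fin.forall_fin_two]

section Generators

variable {n δ : ℕ} {x : ℕ → ℝ}

theorem nodePoly_ne_zero (n : ℕ) (x : ℕ → ℝ) : nodePoly n x ≠ 0 :=
  prod_ne_zero_iff.2 fun i _ h => by
    simpa [MvPolynomial.coeff_C, eq_comm (a := (0 : Fin 2 →₀ ℕ))] using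
      congrArg (MvPolynomial.coeff (Finsupp.single 0 1)) h

theorem nodePoly_mul_X_pow_mul_X_pow (n : ℕ) (x : ℕ → ℝ) (j k : ℕ) :
    nodePoly n x * MvPolynomial.X 0 ^ j * MvPolynomial.X 1 ^ k =
      toMv2 0 ((∏ i ∈ range (n + 1), (X - C (x i))) * X ^ j) * toMv2 1 (X ^ k) := by
  simp [nodePoly, toMv2, eval₂_finsetProd]

theorem totalDegree_le_of_mem_Vgens {g : MvPolynomial (Fin 2) ℝ} (hg : g ∈ Vgens n δ x) :
    g.totalDegree ≤ n + δ := by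
  obtain ⟨j, k, hjk, rfl⟩ := hg
  rw [nodePoly_mul_X_pow_mul_X_pow]
  refine (totalDegree_toMv2_mul_toMv2_le _ _).trans ?_
  have := natDegree_mul_le (p := ∏ i ∈ range (n + 1), (X - C (x i))) (q := X ^ j)
  simp only [natDegree_prod_of_monic _ _ fun i _ => monic_X_sub_C (x i), natDegree_X_sub_C,
    sum_const, card_range, smul_eq_mul, mul_one, natDegree_X_pow] at this ⊢
  omega

theorem eval_eq_zero_of_mem_Vgens {g : MvPolynomial (Fin 2) ℝ} (hg : g ∈ Vgens n δ x)
    {r : ℕ} (hr : r ≤ n) (y₀ : ℝ) : MvPolynomial.eval ![x r, y₀] g = 0 := by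
  obtain ⟨j, k, -, rfl⟩ := hg
  rw [nodePoly_mul_X_pow_mul_X_pow, map_mul, eval_toMv2, eval_toMv2]
  simpa [eval_prod, prod_eq_zero_iff, sub_eq_zero] using Or.inl (Or.inl ⟨r, hr, rfl⟩)

theorem coeff_eq_zero_of_mem_span_Vgens {P : MvPolynomial (Fin 2) ℝ}
    (hP : P ∈ Submodule.span ℝ (Vgens n δ x)) (c : ℕ) {d : ℕ} (hd : δ ≤ d) :
    MvPolynomial.coeff (bideg c d) P = 0 := by
  have hV : Submodule.span ℝ (Vgens n δ x) ≤
      LinearMap.ker (MvPolynomial.lcoeff ℝ (bideg c d)) := by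
    rw [Submodule.span_le]
    rintro _ ⟨j, k, hjk, rfl⟩
    rw [SetLike.mem_coe, LinearMap.mem_ker, MvPolynomial.lcoeff_apply,
      nodePoly_mul_X_pow_mul_X_pow, coeff_toMv2_mul_toMv2, coeff_X_pow, if_neg (by omega),
      mul_zero]
  exact hV hP

end Generators

section Fpoly

variable {n δ τ : ℕ} {p q : ℕ → ℝ[X]}

theorem totalDegree_Fpoly_le (hp : ∀ k ≤ n, (p k).natDegree ≤ k)
    (hq : ∀ k ≤ n + δ, (q k).natDegree ≤ k) {j : ℕ} (hj : j ≤ n) :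
    (Fpoly n δ τ p q j).totalDegree ≤ n + δ := by
  have h₁ := (totalDegree_toMv2_mul_toMv2_le (p (n - j)) (q (j + δ))).trans
    (add_le_add (hp _ (by omega)) (hq _ (by omega)))
  have h₂ := (totalDegree_toMv2_mul_toMv2_le (p j) (q (n + δ - j))).trans
    (add_le_add (hp _ hj) (hq _ (by omega)))
  refine (MvPolynomial.totalDegree_sub _ _).trans (max_le (by omega) ?_)
  refine (MvPolynomial.totalDegree_mul _ _).trans ?_
  rw [MvPolynomial.totalDegree_C]
  omega

theorem eval_Fpoly_eq_zero {j r u : ℕ} {x₀ y₀ : ℝ}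
    (hp : (p (n - j)).eval x₀ = (-1) ^ r * (p j).eval x₀)
    (hq : (q (n + δ - j)).eval y₀ = (-1) ^ u * (q (j + δ)).eval y₀)
    (hsign : (-1 : ℝ) ^ r = (-1) ^ τ * (-1) ^ u) :
    MvPolynomial.eval ![x₀, y₀] (Fpoly n δ τ p q j) = 0 := by
  simp only [Fpoly, map_sub, map_mul, eval_toMv2, MvPolynomial.eval_C]
  simp only [Matrix.cons_val_zero, Matrix.cons_val_one, hp, hq, hsign]
  ring

/-- For `i ≠ j` the first term misses `x^(n-i)` (if `i < j`) or `y^(i+δ)` (if `j < i`) for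
degree reasons; the second term always misses `x^(n-i)`, as `j < n - i`. -/
theorem coeff_Fpoly (hp : ∀ k ≤ n, (p k).natDegree ≤ k)
    (hq : ∀ k ≤ n + δ, (q k).natDegree ≤ k) {i j : ℕ} (hij : i + j < n) :
    MvPolynomial.coeff (bideg (n - i) (i + δ)) (Fpoly n δ τ p q j) =
      if i = j then (p (n - i)).coeff (n - i) * (q (i + δ)).coeff (i + δ) else 0 := by
  have hpj : (p j).coeff (n - i) = 0 :=
    coeff_eq_zero_of_natDegree_lt ((hp j (by omega)).trans_lt (by omega))
  rw [Fpoly, MvPolynomial.coeff_sub, MvPolynomial.coeff_C_mul, coeff_toMv2_mul_toMv2,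
    coeff_toMv2_mul_toMv2, hpj, zero_mul, mul_zero, sub_zero]
  split_ifs with h
  · rw [h]
  obtain h | h := Nat.lt_or_gt_of_ne h
  · rw [coeff_eq_zero_of_natDegree_lt ((hp (n - j) (by omega)).trans_lt (by omega)), zero_mul]
  · rw [coeff_eq_zero_of_natDegree_lt ((hq (j + δ) (by omega)).trans_lt (by omega)), mul_zero]

end Fpoly

section Family

variable (n δ τ : ℕ) (x : ℕ → ℝ) (p q : ℕ → ℝ[X]) (m : ℕ)

def Qgens : Set (MvPolynomial (Fin 2) ℝ) :=
  Vgens n δ x ∪ {g | ∃ j < m, g = Fpoly n δ τ p q j}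

/-- The index `⟨a, b⟩` with `b < δ - a` stands for the generator `nodePoly * x^a y^b`. -/
noncomputable def Vfamily (ab : Σ a : Fin δ, Fin (δ - a)) : MvPolynomial (Fin 2) ℝ :=
  nodePoly n x * MvPolynomial.X 0 ^ (ab.1 : ℕ) * MvPolynomial.X 1 ^ (ab.2 : ℕ)

noncomputable def Qfamily : (Σ a : Fin δ, Fin (δ - a)) ⊕ Fin m → MvPolynomial (Fin 2) ℝ :=
  Sum.elim (Vfamily n δ x) fun j => Fpoly n δ τ p q j

theorem range_Vfamily : Set.range (Vfamily n δ x) = Vgens n δ x := by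
  ext g
  constructor
  · rintro ⟨⟨a, b⟩, rfl⟩
    exact ⟨a, b, by omega, rfl⟩
  · rintro ⟨j, k, hjk, rfl⟩
    exact ⟨⟨⟨j, by omega⟩, ⟨k, by simp only; omega⟩⟩, rfl⟩

theorem range_Qfamily : Set.range (Qfamily n δ τ x p q m) = Qgens n δ τ x p q m := by
  rw [Qfamily, Set.Sum.elim_range, range_Vfamily, Qgens]
  congr 1
  ext g
  exact ⟨fun ⟨j, hj⟩ => ⟨j, j.2, hj.symm⟩,
    fun ⟨j, hj, hg⟩ => ⟨⟨j, hj⟩, hg.symm⟩⟩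

theorem card_Vindex : Fintype.card (Σ a : Fin δ, Fin (δ - a)) = δ * (δ + 1) / 2 := by
  have hreflect : ∑ a ∈ range δ, (δ - a) = ∑ a ∈ range (δ + 1), a := by
    rw [sum_range_succ', add_zero, ← sum_range_reflect]
    exact sum_congr rfl fun a ha => by rw [mem_range] at ha; omega
  simp only [Fintype.card_sigma, Fintype.card_fin]
  rw [Fin.sum_univ_eq_sum_range (δ - ·), hreflect, sum_range_id, Nat.add_sub_cancel, mul_comm]

theorem linearIndependent_Vfamily : LinearIndependent ℝ (Vfamily n δ x) := by
  have hinj : Function.Injective fun ab : Σ a : Fin δ, Fin (δ - a) => bideg ab.1 ab.2 := by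
    rintro ⟨a, b⟩ ⟨a', b'⟩ h
    have h₀ := DFunLike.congr_fun h 0
    have h₁ := DFunLike.congr_fun h 1
    simp only [Finsupp.add_apply, Finsupp.single_apply] at h₀ h₁
    obtain rfl : a = a' := Fin.ext (by simpa using h₀)
    obtain rfl : b = b' := Fin.ext (by simpa using h₁)
    rfl
  have hfactor : Vfamily n δ x = LinearMap.mulLeft ℝ (nodePoly n x) ∘
      MvPolynomial.basisMonomials (Fin 2) ℝ ∘ fun ab => bideg ab.1 ab.2 := by
    funext ab
    simp [Vfamily, MvPolynomial.X_pow_eq_monomial, MvPolynomial.monomial_mul, mul_assoc]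
  rw [hfactor]
  exact ((MvPolynomial.basisMonomials (Fin 2) ℝ).linearIndependent.comp _ hinj).map' _
    (LinearMap.ker_eq_bot.2 (mul_right_injective₀ (nodePoly_ne_zero n x)))

end Family

section Q

variable {n m δ τ : ℕ} {x : ℕ → ℝ} {p q : ℕ → ℝ[X]}

theorem linearIndependent_Qfamily (hmn : 2 * m ≤ n + 1) (hp : ∀ k ≤ n, (p k).natDegree ≤ k)
    (hq : ∀ k ≤ n + δ, (q k).natDegree ≤ k)
    (hlead : ∀ i < m, (p (n - i)).coeff (n - i) * (q (i + δ)).coeff (i + δ) ≠ 0) :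
    LinearIndependent ℝ (Qfamily n δ τ x p q m) := by
  let L : MvPolynomial (Fin 2) ℝ →ₗ[ℝ] Fin m → ℝ :=
    LinearMap.pi fun i => MvPolynomial.lcoeff ℝ (bideg (n - i) (i + δ))
  have hdiag : L ∘ (fun j : Fin m => Fpoly n δ τ p q j) = fun j : Fin m =>
      Pi.single j ((p (n - j)).coeff (n - j) * (q (j + δ)).coeff (j + δ)) := by
    funext j i
    simp only [L, Function.comp_apply, LinearMap.pi_apply, MvPolynomial.lcoeff_apply,
      coeff_Fpoly hp hq (by omega : (i : ℕ) + j < n), Fin.val_inj, Pi.single_apply]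
    split_ifs with h
    · rw [h]
    · rfl
  have hF : LinearIndependent ℝ (L ∘ fun j : Fin m => Fpoly n δ τ p q j) :=
    hdiag ▸ Pi.linearIndependent_single_of_ne_zero fun j => hlead j j.2
  have hV : Submodule.span ℝ (Set.range (Vfamily n δ x)) ≤ LinearMap.ker L := by
    rw [range_Vfamily]
    intro P hP
    ext i
    exact coeff_eq_zero_of_mem_span_Vgens hP _ (Nat.le_add_left δ i)
  exact (linearIndependent_Vfamily n δ x).sum_type hF.of_comp
    ((Submodule.range_ker_disjoint hF).symm.mono_left hV)

theorem totalDegree_le_of_mem_span_Qgens (hmn : m ≤ n + 1)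
    (hp : ∀ k ≤ n, (p k).natDegree ≤ k) (hq : ∀ k ≤ n + δ, (q k).natDegree ≤ k)
    {P : MvPolynomial (Fin 2) ℝ} (hP : P ∈ Submodule.span ℝ (Qgens n δ τ x p q m)) :
    P.totalDegree ≤ n + δ := by
  refine MvPolynomial.totalDegree_le_of_mem_span ?_ hP
  rintro g (hg | ⟨j, hj, rfl⟩)
  · exact totalDegree_le_of_mem_Vgens hg
  · exact totalDegree_Fpoly_le hp hq (by omega)

theorem eval_eq_zero_of_mem_span_Qgens (hmn : m ≤ n + 1)
    (hxalt : ∀ j r, j ≤ n → r ≤ n → (p (n - j)).eval (x r) = (-1) ^ r * (p j).eval (x r))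
    {y₀ : ℝ} {u : ℕ}
    (hyalt : ∀ j < m, (q (n + δ - j)).eval y₀ = (-1) ^ u * (q (j + δ)).eval y₀)
    {P : MvPolynomial (Fin 2) ℝ} (hP : P ∈ Submodule.span ℝ (Qgens n δ τ x p q m))
    {r : ℕ} (hr : r ≤ n) (hpar : (r + u) % 2 = τ) :
    MvPolynomial.eval ![x r, y₀] P = 0 := by
  refine MvPolynomial.eval_eq_zero_of_mem_span ?_ hP
  rintro g (hg | ⟨j, hj, rfl⟩)
  · exact eval_eq_zero_of_mem_Vgens hg hr y₀
  · exact eval_Fpoly_eq_zero (hxalt j r (by omega) hr) (hyalt j hj)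
      (neg_one_pow_eq_of_mod_two_eq hpar)

end Q

theorem dim_Q_eq_dim_sub_card_nodes {m n σ δ : ℕ} (hm : 1 ≤ m) (hn : n = 2 * m - 1)
    (hσ : σ = 2 * δ) :
    δ * (δ + 1) / 2 + m = (n + δ + 1) * (n + δ + 2) / 2 - (n + 1) * (n + σ + 1) / 2 := by
  obtain ⟨k, rfl⟩ : ∃ k, m = k + 1 := ⟨m - 1, by omega⟩
  obtain rfl : n = 2 * k + 1 := by omega
  subst hσ
  have h₁ : (2 * k + 1 + δ + 1) * (2 * k + 1 + δ + 2) =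
      δ * (δ + 1) + 2 * ((k + 1) * (2 * k + 2 + 2 * δ) + (k + 1)) := by ring
  have h₂ : (2 * k + 1 + 1) * (2 * k + 1 + 2 * δ + 1) =
      2 * ((k + 1) * (2 * k + 2 + 2 * δ)) := by ring
  rw [h₁, h₂, Nat.add_mul_div_left _ _ two_pos, Nat.mul_div_cancel_left _ two_pos]
  omega

theorem Q_subspace_odd_general (n m σ δ τ : ℕ) (hm : 1 ≤ m) (hn : n = 2*m - 1)
    (hσ : σ = 2*δ)
    (x y : ℕ → ℝ)
    (p q : ℕ → Polynomial ℝ)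
    (hq0 : q 0 = 1)
    (hpdeg : ∀ j, j ≤ n → (p j).natDegree = j)
    (hqdeg : ∀ k, k ≤ n + σ → (q k).natDegree = k)
    (hxalt : ∀ j r, j ≤ n → r ≤ n →
      (p (n - j)).eval (x r) = (-1)^r * (p j).eval (x r))
    (hyalt : ∀ k u, k ≤ n + σ → u ≤ n + σ →
      (q (n + σ - k)).eval (y u) = (-1)^u * (q k).eval (y u)) :
    (∀ P ∈ Submodule.span ℝ
        (Vgens n δ x ∪ {g | ∃ j < m, g = Fpoly n δ τ p q j}),
      MvPolynomial.totalDegree P ≤ n + δ) ∧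
    (∀ P ∈ Submodule.span ℝ
        (Vgens n δ x ∪ {g | ∃ j < m, g = Fpoly n δ τ p q j}),
      ∀ r u, r ≤ n → u ≤ n + σ → (r + u) % 2 = τ →
        MvPolynomial.eval ![x r, y u] P = 0) ∧
    Module.finrank ℝ (Submodule.span ℝ
        (Vgens n δ x ∪ {g | ∃ j < m, g = Fpoly n δ τ p q j}))
      = δ * (δ + 1) / 2 + m ∧
    δ * (δ + 1) / 2 + m
      = (n + δ + 1) * (n + δ + 2) / 2 - (n + 1) * (n + σ + 1) / 2 := by
  have hp : ∀ k ≤ n, (p k).natDegree ≤ k := fun k hk => (hpdeg k hk).le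
  have hq : ∀ k ≤ n + δ, (q k).natDegree ≤ k := fun k hk => (hqdeg k (by omega)).le
  have hlead : ∀ i < m, (p (n - i)).coeff (n - i) * (q (i + δ)).coeff (i + δ) ≠ 0 := by
    intro i hi
    refine mul_ne_zero (coeff_ne_zero_of_natDegree_eq (hpdeg _ (by omega)) (by omega)) ?_
    rcases Nat.eq_zero_or_pos (i + δ) with h | h
    · simp [h, hq0]
    · exact coeff_ne_zero_of_natDegree_eq (hqdeg _ (by omega)) h.ne'
  refine ⟨fun P hP => totalDegree_le_of_mem_span_Qgens (by omega) hp hq hP,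
    fun P hP r u hr hu hpar => eval_eq_zero_of_mem_span_Qgens (by omega) hxalt
      (fun j hj => ?_) hP hr hpar, ?_, dim_Q_eq_dim_sub_card_nodes hm hn hσ⟩
  · rw [show n + δ - j = n + σ - (j + δ) by omega]
    exact hyalt _ _ (by omega) hu
  · have hli := linearIndependent_Qfamily (τ := τ) (x := x) (by omega) hp hq hlead
    calc _ = Module.finrank ℝ (Submodule.span ℝ (Set.range (Qfamily n δ τ x p q m))) := by
          rw [range_Qfamily]; rfl
      _ = _ := by rw [finrank_span_eq_card hli, Fintype.card_sum, card_Vindex, Fintype.card_fin]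

theorem Q_subspace_odd (n m σ δ τ : ℕ) (hm : 1 ≤ m) (hn : n = 2*m - 1)
    (hσ : σ = 2*δ) (hτ : τ ≤ 1)
    (x y : ℕ → ℝ)
    (hx : ∀ j, j < n → x (j+1) < x j)
    (hy : ∀ j, j < n + σ → y (j+1) < y j)
    (a b c d : ℕ → ℝ) (p q : ℕ → Polynomial ℝ)
    (hp0 : p 0 = 1) (hp1 : p 1 = C (a 0) * X + C (b 0))
    (hprec : ∀ k, 1 ≤ k → k ≤ n - 1 →
      p (k+1) + p (k-1) = (C (a k) * X + C (b k)) * p k)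
    (hq0 : q 0 = 1) (hq1 : q 1 = C (c 0) * X + C (d 0))
    (hqrec : ∀ k, 1 ≤ k → k ≤ n + σ - 1 →
      q (k+1) + q (k-1) = (C (c k) * X + C (d k)) * q k)
    (hapos : ∀ k, k ≤ n - 1 → 0 < a k)
    (hcpos : ∀ k, k ≤ n + σ - 1 → 0 < c k)
    (harefl : ∀ k, 1 ≤ k → k ≤ n - 1 → a k = a (n - k) ∧ b k = b (n - k))
    (hcrefl : ∀ k, 1 ≤ k → k ≤ n + σ - 1 →
      c k = c (n + σ - k) ∧ d k = d (n + σ - k))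
    (hpdeg : ∀ j, j ≤ n → (p j).natDegree = j)
    (hqdeg : ∀ k, k ≤ n + σ → (q k).natDegree = k)
    (hxalt : ∀ j r, j ≤ n → r ≤ n →
      (p (n - j)).eval (x r) = (-1)^r * (p j).eval (x r))
    (hyalt : ∀ k u, k ≤ n + σ → u ≤ n + σ →
      (q (n + σ - k)).eval (y u) = (-1)^u * (q k).eval (y u)) :
    (∀ P ∈ Submodule.span ℝ
        (Vgens n δ x ∪ {g | ∃ j < m, g = Fpoly n δ τ p q j}),
      MvPolynomial.totalDegree P ≤ n + δ) ∧
    (∀ P ∈ Submodule.span ℝ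
        (Vgens n δ x ∪ {g | ∃ j < m, g = Fpoly n δ τ p q j}),
      ∀ r u, r ≤ n → u ≤ n + σ → (r + u) % 2 = τ →
        MvPolynomial.eval ![x r, y u] P = 0) ∧
    Module.finrank ℝ (Submodule.span ℝ
        (Vgens n δ x ∪ {g | ∃ j < m, g = Fpoly n δ τ p q j}))
      = δ * (δ + 1) / 2 + m ∧
    δ * (δ + 1) / 2 + m
      = (n + δ + 1) * (n + δ + 2) / 2 - (n + 1) * (n + σ + 1) / 2 :=
  Q_subspace_odd_general n m σ δ τ hm hn hσ x y p q hq0 hpdeg hqdeg hxalt hyalt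
end
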